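/- arXiv:1810.05132 — 12 statements merged into one kernel-verified Lean document; each statement's English description precedes it below -/
import Mathlib

section
/- Let K ⊆ L be an extension of ordered fields, each equipped with a compatible non-archimedean absolute value, the one on L extending the one on K, and suppose the value set |K| is dense in ℝ≥0. Then for every f ∈ L, |f| = sup { |r| : r ∈ K, 0 ≤ r ≤ sgn(f)·f }. -/
/-!
Compatibility with the order makes `v` monotone on `0 ≤ a`, and multiplicativity with
nonnegativity gives `v (-a) = v a`, so `v |f| = v f` bounds the set from above. Conversely,
if `b < v f`, density yields `r ∈ K` with `b < v (ι r) < v f`; replacing `r` by `±r` makes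
`ι r ≥ 0`, and monotonicity forces `ι r ≤ |f|`, so `v (ι r)` lies in the set above `b`.
-/

section AbsoluteValueLike

variable {R : Type*} {v : R → ℝ}

theorem map_neg_eq_of_nonneg_of_map_mul [Ring R] (hnonneg : ∀ a, 0 ≤ v a)
    (hmul : ∀ a b, v (a * b) = v a * v b) (a : R) : v (-a) = v a :=
  (mul_self_inj (hnonneg _) (hnonneg _)).1 (by rw [← hmul, ← hmul, neg_mul_neg])

theorem map_abs_eq_of_map_neg [AddGroup R] [LinearOrder R] (hneg : ∀ a, v (-a) = v a) (a : R) :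
    v |a| = v a := by
  rcases abs_choice a with h | h <;> rw [h]
  exact hneg a

theorem le_abs_of_map_lt [AddCommGroup R] [LinearOrder R] [IsOrderedAddMonoid R]
    (hcomp : ∀ a b : R, 0 ≤ a → a ≤ b → v a ≤ v b)
    (habs : ∀ a, v |a| = v a) {x y : R} (hxy : v x < v y) : x ≤ |y| := by
  by_contra! hyx
  have := hcomp _ _ (abs_nonneg y) hyx.le
  rw [habs] at this
  linarith

end AbsoluteValueLike

theorem exists_map_eq_abs_map {K L : Type*} [Ring K] [Ring L] [LinearOrder L] (ι : K →+* L)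
    (r : K) : ∃ s : K, ι s = |ι r| := by
  rcases abs_choice (ι r) with h | h
  · exact ⟨r, h.symm⟩
  · exact ⟨-r, by rw [map_neg, h]⟩

theorem stmt_1_general {K L : Type*} [Field K]
    [Field L] [LinearOrder L] [IsStrictOrderedRing L]
    (ι : K →+* L)
    (v : L → ℝ)
    (hnonneg : ∀ a, 0 ≤ v a)
    (hmul : ∀ a b, v (a * b) = v a * v b)
    (hcomp : ∀ a b : L, 0 ≤ a → a ≤ b → v a ≤ v b)
    (hdense : ∀ c : ℝ, 0 ≤ c → ∀ ε : ℝ, 0 < ε → ∃ r : K, |v (ι r) - c| < ε)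
    (f : L) :
    IsLUB {t : ℝ | ∃ r : K, 0 ≤ ι r ∧ ι r ≤ |f| ∧ t = v (ι r)} (v f) := by
  have habs := map_abs_eq_of_map_neg (map_neg_eq_of_nonneg_of_map_mul hnonneg hmul)
  refine ⟨?_, fun b hb => ?_⟩
  · rintro _ ⟨r, hr0, hrf, rfl⟩
    exact habs f ▸ hcomp _ _ hr0 hrf
  have hb0 : 0 ≤ b := (hnonneg _).trans (hb ⟨0, by simp, by simp, rfl⟩)
  by_contra! hlt
  obtain ⟨r, hr⟩ := hdense ((b + v f) / 2) (by linarith) ((v f - b) / 2) (by linarith)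
  obtain ⟨hr_lo, hr_hi⟩ := abs_lt.1 hr
  obtain ⟨s, hs⟩ := exists_map_eq_abs_map ι r
  have hvs : v (ι s) = v (ι r) := by rw [hs, habs]
  have hs0 : 0 ≤ ι s := hs ▸ abs_nonneg _
  have hsf : ι s ≤ |f| := le_abs_of_map_lt hcomp habs (by linarith)
  linarith [hb ⟨s, hs0, hsf, hvs.symm⟩]

/-- For an extension `L/K` of ordered fields with compatible non-archimedean absolute
values, with `|K|` dense in `ℝ≥0`, the absolute value of `f ∈ L` is the supremum of the
absolute values of the elements `r ∈ K` with `0 ≤ r ≤ sgn(f)·f = |f|`. -/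
theorem stmt_1 {K L : Type*} [Field K] [LinearOrder K] [IsStrictOrderedRing K]
    [Field L] [LinearOrder L] [IsStrictOrderedRing L]
    (ι : K →+* L) (hmono : ∀ a b : K, a ≤ b → ι a ≤ ι b)
    (v : L → ℝ)
    (hnonneg : ∀ a, 0 ≤ v a) (hzero : ∀ a, v a = 0 ↔ a = 0)
    (hmul : ∀ a b, v (a * b) = v a * v b)
    (hna : ∀ a b, v (a + b) ≤ max (v a) (v b))
    (hcomp : ∀ a b : L, 0 ≤ a → a ≤ b → v a ≤ v b)
    (hdense : ∀ c : ℝ, 0 ≤ c → ∀ ε : ℝ, 0 < ε → ∃ r : K, |v (ι r) - c| < ε)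
    (f : L) :
    IsLUB {t : ℝ | ∃ r : K, 0 ≤ ι r ∧ ι r ≤ |f| ∧ t = v (ι r)} (v f) :=
  stmt_1_general ι v hnonneg hmul hcomp hdense f
end

section
/- Let A be a commutative ring and let |·|ˢ : A → ℝ be a signed seminorm, i.e., |fg|ˢ = |f|ˢ·|g|ˢ and min(|f|ˢ,|g|ˢ) ≤ |f+g|ˢ ≤ max(|f|ˢ,|g|ˢ) for all f,g, and |1|ˢ = 1, |-1|ˢ = -1. Then the set P = { f ∈ A : |f|ˢ ≥ 0 } is an ordering of A, i.e., P + P ⊆ P, P·P ⊆ P, P ∪ (−P) = A, and P ∩ (−P) is a prime ideal of A. -/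
/-!
Multiplicativity and `s (-1) = -1` give `s (-f) = -s f`, so the lower bound
`min (s f) (s g) ≤ s (f + g)` applied to `-f, -g` yields the matching upper bound by `max`.
Hence `f ↦ |s f|` is a valuation with values in `ℝ≥0`, and `P ∩ -P = {f | s f = 0}` is its
support, which is a prime ideal.
-/

open scoped NNReal

structure IsSignedSeminorm_s2 {A : Type*} [CommRing A] (s : A → ℝ) : Prop where
  map_mul : ∀ f g, s (f * g) = s f * s g
  min_le_map_add : ∀ f g, min (s f) (s g) ≤ s (f + g)
  map_neg_one : s (-1) = -1

namespace IsSignedSeminorm_s2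

variable {A : Type*} [CommRing A] {s : A → ℝ}

theorem map_neg (hs : IsSignedSeminorm_s2 s) (f : A) : s (-f) = -s f := by
  rw [← neg_one_mul, hs.map_mul, hs.map_neg_one, neg_one_mul]

theorem map_zero (hs : IsSignedSeminorm_s2 s) : s 0 = 0 := by
  have h := hs.map_neg 0
  rw [neg_zero] at h
  linarith

theorem map_one (hs : IsSignedSeminorm_s2 s) : s 1 = 1 := by
  have h := hs.map_mul (-1) (-1)
  rwa [neg_mul_neg, one_mul, hs.map_neg_one, neg_mul_neg, one_mul] at h

theorem map_add_le_max (hs : IsSignedSeminorm_s2 s) (f g : A) :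
    s (f + g) ≤ max (s f) (s g) := by
  have h := hs.min_le_map_add (-f) (-g)
  rw [← neg_add, hs.map_neg, hs.map_neg, hs.map_neg, min_neg_neg] at h
  exact neg_le_neg_iff.mp h

theorem abs_map_add_le_max (hs : IsSignedSeminorm_s2 s) (f g : A) :
    |s (f + g)| ≤ max |s f| |s g| := by
  have hle : ∀ f g : A, s (f + g) ≤ max |s f| |s g| := fun f g =>
    (hs.map_add_le_max f g).trans (max_le_max (le_abs_self _) (le_abs_self _))
  have hneg := hle (-f) (-g)
  rw [← neg_add, hs.map_neg, hs.map_neg, hs.map_neg, abs_neg, abs_neg] at hneg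
  exact abs_le'.mpr ⟨hle f g, hneg⟩

noncomputable def absValuation (hs : IsSignedSeminorm_s2 s) : Valuation A ℝ≥0 where
  toFun f := ‖s f‖₊
  map_zero' := by simp [hs.map_zero]
  map_one' := by simp [hs.map_one]
  map_mul' f g := by simp [hs.map_mul]
  map_add_le_max' f g := by
    simpa only [← NNReal.coe_le_coe, NNReal.coe_max, coe_nnnorm, Real.norm_eq_abs]
      using hs.abs_map_add_le_max f g

theorem mem_supp_absValuation_iff (hs : IsSignedSeminorm_s2 s) (f : A) :
    f ∈ hs.absValuation.supp ↔ 0 ≤ s f ∧ 0 ≤ s (-f) := by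
  rw [Valuation.mem_supp_iff, hs.map_neg, neg_nonneg, ← le_antisymm_iff]
  exact nnnorm_eq_zero.trans eq_comm

end IsSignedSeminorm_s2

theorem stmt_2_general {A : Type*} [CommRing A] (s : A → ℝ)
    (hmul : ∀ f g, s (f * g) = s f * s g)
    (hadd₁ : ∀ f g, min (s f) (s g) ≤ s (f + g))
    (hneg1 : s (-1) = -1) :
    (∀ f g : A, 0 ≤ s f → 0 ≤ s g → 0 ≤ s (f + g)) ∧
    (∀ f g : A, 0 ≤ s f → 0 ≤ s g → 0 ≤ s (f * g)) ∧
    (∀ f : A, 0 ≤ s f ∨ 0 ≤ s (-f)) ∧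
    (∃ I : Ideal A, I.IsPrime ∧ ∀ f : A, f ∈ I ↔ (0 ≤ s f ∧ 0 ≤ s (-f))) := by
  have hs : IsSignedSeminorm_s2 s := ⟨hmul, hadd₁, hneg1⟩
  refine ⟨fun f g hf hg => (le_min hf hg).trans (hadd₁ f g),
    fun f g hf hg => hmul f g ▸ mul_nonneg hf hg, fun f => ?_,
    hs.absValuation.supp, inferInstance, hs.mem_supp_absValuation_iff⟩
  rw [hs.map_neg, neg_nonneg]
  exact le_total 0 (s f)

/-- For a signed seminorm `s` on a commutative ring `A`, the set
`P = {f : 0 ≤ s f}` is an ordering of `A`: it is closed under addition and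
multiplication, `P ∪ -P = A`, and `P ∩ -P` is a prime ideal. -/
theorem stmt_2 {A : Type*} [CommRing A] (s : A → ℝ)
    (hmul : ∀ f g, s (f * g) = s f * s g)
    (hadd₁ : ∀ f g, min (s f) (s g) ≤ s (f + g))
    (hadd₂ : ∀ f g, s (f + g) ≤ max (s f) (s g))
    (h1 : s 1 = 1) (hneg1 : s (-1) = -1) :
    (∀ f g : A, 0 ≤ s f → 0 ≤ s g → 0 ≤ s (f + g)) ∧
    (∀ f g : A, 0 ≤ s f → 0 ≤ s g → 0 ≤ s (f * g)) ∧
    (∀ f : A, 0 ≤ s f ∨ 0 ≤ s (-f)) ∧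
    (∃ I : Ideal A, I.IsPrime ∧ ∀ f : A, f ∈ I ↔ (0 ≤ s f ∧ 0 ≤ s (-f))) :=
  stmt_2_general s hmul hadd₁ hneg1
end

section
/- Let L be a field with a non-archimedean absolute value |·| : L → ℝ≥0 and let P be an ordering of L compatible with |·|. Let O = { a ∈ L : |a| ≤ 1 } be the valuation ring, m = { a : |a| < 1 } its maximal ideal, and k = O/m the residue field. Then the set P̄ = { ā ∈ k : a ∈ P ∩ O } is an ordering of the field k. -/
/-!
Closure under sums and products and totality pass to the image of `P ∩ O` under any surjective
ring map. The only real point is that `P̄ ∩ -P̄ = 0`: if `ā = -b̄` with `a, b ∈ P ∩ O`, then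
`a + b ∈ m`, and compatibility applied to `0 ≤ a ≤ a + b` gives `|a| ≤ |a + b| < 1`.
-/

section Image

variable {R S : Type*} [Ring R] [Ring S] (f : R →+* S) {Q : Set R}

theorem add_mem_image_of_add_mem (hQ : ∀ a ∈ Q, ∀ b ∈ Q, a + b ∈ Q) :
    ∀ x ∈ f '' Q, ∀ y ∈ f '' Q, x + y ∈ f '' Q := by
  rintro _ ⟨a, ha, rfl⟩ _ ⟨b, hb, rfl⟩
  exact ⟨a + b, hQ a ha b hb, map_add f a b⟩

theorem mul_mem_image_of_mul_mem (hQ : ∀ a ∈ Q, ∀ b ∈ Q, a * b ∈ Q) :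
    ∀ x ∈ f '' Q, ∀ y ∈ f '' Q, x * y ∈ f '' Q := by
  rintro _ ⟨a, ha, rfl⟩ _ ⟨b, hb, rfl⟩
  exact ⟨a * b, hQ a ha b hb, map_mul f a b⟩

theorem mem_image_or_neg_mem_image {f : R →+* S} (hf : Function.Surjective f)
    (hQ : ∀ a, a ∈ Q ∨ -a ∈ Q) : ∀ x, x ∈ f '' Q ∨ -x ∈ f '' Q := by
  intro x
  obtain ⟨a, rfl⟩ := hf x
  rcases hQ a with ha | ha
  · exact Or.inl ⟨a, ha, rfl⟩
  · exact Or.inr ⟨-a, ha, map_neg f a⟩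

end Image

theorem abv_le_abv_add_of_mem {L : Type*} [Field L] {v : L → ℝ} {P : Set L}
    (hPadd : ∀ a ∈ P, ∀ b ∈ P, a + b ∈ P)
    (hPcomp : ∀ a b : L, a ∈ P → b ∈ P → b - a ∈ P → v a ≤ v b)
    {a b : L} (ha : a ∈ P) (hb : b ∈ P) : v a ≤ v (a + b) :=
  hPcomp a (a + b) ha (hPadd a ha b hb) (by rwa [add_sub_cancel_left])

theorem stmt_5_general {L : Type*} [Field L] (v : L → ℝ)
    (P : Set L)
    (hPadd : ∀ a ∈ P, ∀ b ∈ P, a + b ∈ P)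
    (hPmul : ∀ a ∈ P, ∀ b ∈ P, a * b ∈ P)
    (hPtot : ∀ a : L, a ∈ P ∨ -a ∈ P)
    (hPcomp : ∀ a b : L, a ∈ P → b ∈ P → b - a ∈ P → v a ≤ v b)
    (O : Subring L)
    (m : Ideal O) (hm : ∀ a : O, a ∈ m ↔ v (a : L) < 1) :
    let Pbar : Set (O ⧸ m) := {x | ∃ a : O, (a : L) ∈ P ∧ Ideal.Quotient.mk m a = x}
    (∀ x ∈ Pbar, ∀ y ∈ Pbar, x + y ∈ Pbar) ∧
    (∀ x ∈ Pbar, ∀ y ∈ Pbar, x * y ∈ Pbar) ∧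
    (∀ x : O ⧸ m, x ∈ Pbar ∨ -x ∈ Pbar) ∧
    (∀ x : O ⧸ m, x ∈ Pbar → -x ∈ Pbar → x = 0) := by
  intro Pbar
  refine ⟨add_mem_image_of_add_mem _ fun a ha b hb => hPadd a ha b hb,
    mul_mem_image_of_mul_mem _ fun a ha b hb => hPmul a ha b hb,
    mem_image_or_neg_mem_image Ideal.Quotient.mk_surjective fun a => hPtot a, ?_⟩
  rintro _ ⟨a, ha, rfl⟩ ⟨b, hb, hba⟩
  have hab : a + b ∈ m := by
    rw [← Ideal.Quotient.eq_zero_iff_mem, map_add, hba, add_neg_cancel]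
  rw [Ideal.Quotient.eq_zero_iff_mem, hm]
  exact (abv_le_abv_add_of_mem hPadd hPcomp ha hb).trans_lt ((hm _).1 hab)

/-- Let `L` be a field with a non-archimedean absolute value `v`, `P` a compatible
ordering of `L`, `O` the valuation ring, `m` its maximal ideal and `k = O ⧸ m` the
residue field.  Then the image `P̄` of `P ∩ O` in `k` is an ordering of `k`. -/
theorem stmt_5 {L : Type*} [Field L] (v : L → ℝ)
    (hnonneg : ∀ a, 0 ≤ v a) (hzero : ∀ a, v a = 0 ↔ a = 0)
    (hmul : ∀ a b, v (a * b) = v a * v b)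
    (hna : ∀ a b, v (a + b) ≤ max (v a) (v b))
    (P : Set L)
    (hPadd : ∀ a ∈ P, ∀ b ∈ P, a + b ∈ P)
    (hPmul : ∀ a ∈ P, ∀ b ∈ P, a * b ∈ P)
    (hPtot : ∀ a : L, a ∈ P ∨ -a ∈ P)
    (hPsupp : ∀ a : L, a ∈ P → -a ∈ P → a = 0)
    (hPcomp : ∀ a b : L, a ∈ P → b ∈ P → b - a ∈ P → v a ≤ v b)
    (O : Subring L) (hO : ∀ a : L, a ∈ O ↔ v a ≤ 1)
    (m : Ideal O) (hm : ∀ a : O, a ∈ m ↔ v (a : L) < 1) :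
    let Pbar : Set (O ⧸ m) := {x | ∃ a : O, (a : L) ∈ P ∧ Ideal.Quotient.mk m a = x}
    (∀ x ∈ Pbar, ∀ y ∈ Pbar, x + y ∈ Pbar) ∧
    (∀ x ∈ Pbar, ∀ y ∈ Pbar, x * y ∈ Pbar) ∧
    (∀ x : O ⧸ m, x ∈ Pbar ∨ -x ∈ Pbar) ∧
    (∀ x : O ⧸ m, x ∈ Pbar → -x ∈ Pbar → x = 0) :=
  stmt_5_general v P hPadd hPmul hPtot hPcomp O m hm
end

section
/- The orderings of the polynomial ring ℝ[T] are exactly the following: for each a ∈ ℝ, the sets P_a = {f : f(a) ≥ 0}, P_{a+} = {f : f ≥ 0 on [a, a+ε] for some ε > 0}, P_{a-} = {f : f ≥ 0 on [a−ε, a] for some ε > 0}, and the two sets P_∞ = {f : f ≥ 0 on [b, ∞) for some b} and P_{−∞} = {f : f ≥ 0 on (−∞, b] for some b}. In particular, each of these sets is an ordering of ℝ[T], and every ordering of ℝ[T] equals one of them. -/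
/-- An ordering of the ring `ℝ[T]`. -/
def IsOrderingP (P : Set (Polynomial ℝ)) : Prop :=
  (∀ f ∈ P, ∀ g ∈ P, f + g ∈ P) ∧ (∀ f ∈ P, ∀ g ∈ P, f * g ∈ P) ∧
  (∀ f : Polynomial ℝ, f ∈ P ∨ -f ∈ P) ∧
  ∃ I : Ideal (Polynomial ℝ), I.IsPrime ∧ ∀ f : Polynomial ℝ, f ∈ I ↔ (f ∈ P ∧ -f ∈ P)

def Pa (a : ℝ) : Set (Polynomial ℝ) := {f | 0 ≤ f.eval a}

def PaPlus (a : ℝ) : Set (Polynomial ℝ) :=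
  {f | ∃ ε : ℝ, 0 < ε ∧ ∀ x ∈ Set.Icc a (a + ε), 0 ≤ f.eval x}

def PaMinus (a : ℝ) : Set (Polynomial ℝ) :=
  {f | ∃ ε : ℝ, 0 < ε ∧ ∀ x ∈ Set.Icc (a - ε) a, 0 ≤ f.eval x}

def Pinf : Set (Polynomial ℝ) := {f | ∃ b : ℝ, ∀ x : ℝ, b ≤ x → 0 ≤ f.eval x}

def PnegInf : Set (Polynomial ℝ) := {f | ∃ b : ℝ, ∀ x : ℝ, x ≤ b → 0 ≤ f.eval x}

/-! Every real polynomial is a constant times a product of linear factors `X - r` and quadratics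
`(X - s)² + t` with `t > 0`. In an ordering `P` such a quadratic is a square plus a positive
constant, so it never lies in the support `P ∩ -P`. Hence the support is either `(X - a)`, which
forces `P = P_a`, or zero. In the second case the sign of a polynomial is multiplicative, so `P` is
determined by the set of `r` with `X - r ∈ P`; this is a down-set of `ℝ`, hence `ℝ`, `∅`,
`(-∞, a]` or `(-∞, a)`, and these are the linear polynomials in `P_∞`, `P_{-∞}`, `P_{a+}` and
`P_{a-}`. -/

open Polynomial Filter Set Topology

namespace Polynomial

lemma monic_X_sub_C_sq_add_C (s t : ℝ) : ((X - C s) ^ 2 + C t).Monic := by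
  monicity!

lemma natDegree_X_sub_C_sq_add_C (s t : ℝ) : ((X - C s) ^ 2 + C t).natDegree = 2 := by
  compute_degree!

/-- A non-real complex root `z` of `f` gives the factor `(X - re z)² + (im z)²`. -/
lemma exists_X_sub_C_sq_add_C_dvd {f : ℝ[X]} (hf : 0 < f.natDegree) (hroot : ∀ r, ¬f.IsRoot r) :
    ∃ s t, 0 < t ∧ (X - C s) ^ 2 + C t ∣ f := by
  obtain ⟨z, hz⟩ := IsAlgClosed.exists_aeval_eq_zero ℂ f (natDegree_pos_iff_degree_pos.1 hf).ne'
  have him : z.im ≠ 0 := by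
    intro h
    refine hroot z.re ?_
    rw [← Complex.re_add_im z, h, Complex.ofReal_zero, zero_mul, add_zero,
      ← Complex.coe_algebraMap, aeval_algebraMap_apply_eq_algebraMap_eval] at hz
    simpa using hz
  refine ⟨z.re, z.im ^ 2, by positivity, ?_⟩
  convert f.quadratic_dvd_of_aeval_eq_zero_im_ne_zero hz him using 1
  rw [Complex.sq_norm, Complex.normSq_apply]
  simp only [map_add, map_mul, map_pow, map_ofNat]
  ring

theorem induction_on_real_factors {M : ℝ[X] → Prop} (f : ℝ[X]) (C : ∀ c, M (C c))
    (X_sub_C_mul : ∀ r g, g ≠ 0 → M g → M ((X - Polynomial.C r) * g))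
    (quadratic_mul : ∀ s t g, 0 < t → g ≠ 0 → M g →
      M (((X - Polynomial.C s) ^ 2 + Polynomial.C t) * g)) : M f := by
  induction hn : f.natDegree using Nat.strong_induction_on generalizing f with
  | _ n ih =>
  rcases Nat.eq_zero_or_pos n with rfl | hpos
  · rw [eq_C_of_natDegree_eq_zero hn]; exact C _
  have hf : f ≠ 0 := by rintro rfl; simp at hn; omega
  by_cases hroot : ∃ r, f.IsRoot r
  · obtain ⟨r, hr⟩ := hroot
    obtain ⟨g, rfl⟩ := dvd_iff_isRoot.2 hr
    have hg : g ≠ 0 := right_ne_zero_of_mul hf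
    rw [(monic_X_sub_C r).natDegree_mul' hg, natDegree_X_sub_C] at hn
    exact X_sub_C_mul r g hg (ih _ (by omega) g rfl)
  · push Not at hroot
    obtain ⟨s, t, ht, g, rfl⟩ := exists_X_sub_C_sq_add_C_dvd (hn ▸ hpos) hroot
    have hg : g ≠ 0 := right_ne_zero_of_mul hf
    rw [(monic_X_sub_C_sq_add_C s t).natDegree_mul' hg, natDegree_X_sub_C_sq_add_C] at hn
    exact quadratic_mul s t g ht hg (ih _ (by omega) g rfl)

lemma compRingHom_neg_X_injective {R : Type*} [CommRing R] :
    Function.Injective (compRingHom (-X : R[X])) :=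
  Function.LeftInverse.injective (g := compRingHom (-X)) comp_neg_X_comp_neg_X

end Polynomial

def Salient (P : Set ℝ[X]) : Prop := ∀ f ∈ P, -f ∈ P → f = 0

lemma Salient.preimage {P : Set ℝ[X]} (hP : Salient P) {φ : ℝ[X] →+* ℝ[X]}
    (hφ : Function.Injective φ) : Salient (φ ⁻¹' P) := fun f h₁ h₂ =>
  (map_eq_zero_iff φ hφ).1 (hP _ h₁ (by rwa [mem_preimage, map_neg] at h₂))

namespace IsOrderingP

variable {P Q : Set ℝ[X]}

lemma of_salient (hadd : ∀ f ∈ P, ∀ g ∈ P, f + g ∈ P) (hmul : ∀ f ∈ P, ∀ g ∈ P, f * g ∈ P)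
    (htot : ∀ f, f ∈ P ∨ -f ∈ P) (hs : Salient P) : IsOrderingP P := by
  refine ⟨hadd, hmul, htot, ⊥, Ideal.isPrime_bot, fun f => ⟨?_, fun h => hs f h.1 h.2⟩⟩
  rintro rfl
  simpa using htot 0

lemma add_mem (hP : IsOrderingP P) {f g : ℝ[X]} (hf : f ∈ P) (hg : g ∈ P) : f + g ∈ P :=
  hP.1 f hf g hg

lemma mul_mem (hP : IsOrderingP P) {f g : ℝ[X]} (hf : f ∈ P) (hg : g ∈ P) : f * g ∈ P :=
  hP.2.1 f hf g hg

lemma mem_or_neg_mem (hP : IsOrderingP P) (f : ℝ[X]) : f ∈ P ∨ -f ∈ P :=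
  hP.2.2.1 f

lemma mul_self_mem (hP : IsOrderingP P) (f : ℝ[X]) : f * f ∈ P := by
  rcases hP.mem_or_neg_mem f with h | h
  · exact hP.mul_mem h h
  · simpa using hP.mul_mem h h

lemma sq_mem (hP : IsOrderingP P) (f : ℝ[X]) : f ^ 2 ∈ P :=
  sq f ▸ hP.mul_self_mem f

lemma C_mem (hP : IsOrderingP P) {c : ℝ} (hc : 0 ≤ c) : C c ∈ P := by
  simpa [← C_mul, Real.mul_self_sqrt hc] using hP.mul_self_mem (C √c)

lemma sq_add_C_mem (hP : IsOrderingP P) (f : ℝ[X]) {t : ℝ} (ht : 0 ≤ t) : f ^ 2 + C t ∈ P :=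
  hP.add_mem (hP.sq_mem f) (hP.C_mem ht)

lemma neg_one_notMem (hP : IsOrderingP P) : (-1 : ℝ[X]) ∉ P := by
  have h1 : (1 : ℝ[X]) ∈ P := by simpa using hP.C_mem zero_le_one
  obtain ⟨-, -, -, I, hI, hPI⟩ := hP
  exact fun h => hI.ne_top ((I.eq_top_iff_one).2 ((hPI 1).2 ⟨h1, h⟩))

lemma neg_sq_add_C_notMem (hP : IsOrderingP P) (f : ℝ[X]) {t : ℝ} (ht : 0 < t) :
    -(f ^ 2 + C t) ∉ P := by
  intro h
  have hneg : -C t ∈ P := by simpa using hP.add_mem (hP.sq_mem f) h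
  apply hP.neg_one_notMem
  simpa [← C_mul, ht.ne'] using hP.mul_mem (hP.C_mem (inv_nonneg.2 ht.le)) hneg

lemma preimage (hP : IsOrderingP P) (φ : ℝ[X] →+* ℝ[X]) : IsOrderingP (φ ⁻¹' P) := by
  obtain ⟨hadd, hmul, htot, I, hI, hPI⟩ := hP
  refine ⟨fun f hf g hg => ?_, fun f hf g hg => ?_, fun f => ?_, I.comap φ, Ideal.comap_isPrime φ I,
    fun f => ?_⟩
  · simpa [mem_preimage] using hadd _ hf _ hg
  · simpa [mem_preimage] using hmul _ hf _ hg
  · simpa [mem_preimage] using htot (φ f)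
  · simp [hPI]

lemma neg_mem_iff_notMem {f : ℝ[X]} (hP : IsOrderingP P) (hs : Salient P) (hf : f ≠ 0) :
    -f ∈ P ↔ f ∉ P :=
  ⟨fun h h' => hf (hs f h' h), (hP.mem_or_neg_mem f).resolve_left⟩

lemma mul_mem_iff {f g : ℝ[X]} (hP : IsOrderingP P) (hs : Salient P) (hf : f ≠ 0) (hg : g ≠ 0) :
    f * g ∈ P ↔ (f ∈ P ↔ g ∈ P) := by
  have hfg := mul_ne_zero hf hg
  by_cases hfP : f ∈ P <;> by_cases hgP : g ∈ P <;>
    simp only [hfP, hgP, iff_self, iff_true, iff_false, not_true_eq_false]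
  · exact hP.mul_mem hfP hgP
  · rw [← neg_mem_iff_notMem hP hs hfg, ← mul_neg]
    exact hP.mul_mem hfP ((neg_mem_iff_notMem hP hs hg).2 hgP)
  · rw [← neg_mem_iff_notMem hP hs hfg, ← neg_mul]
    exact hP.mul_mem ((neg_mem_iff_notMem hP hs hf).2 hfP) hgP
  · rw [← neg_mul_neg]
    exact hP.mul_mem ((neg_mem_iff_notMem hP hs hf).2 hfP) ((neg_mem_iff_notMem hP hs hg).2 hgP)


lemma C_mem_iff (hP : IsOrderingP P) (hs : Salient P) {c : ℝ} : C c ∈ P ↔ 0 ≤ c := by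
  refine ⟨fun h => not_lt.1 fun hc => ?_, hP.C_mem⟩
  have : -C c ∈ P := by simpa using hP.C_mem (neg_nonneg.2 hc.le)
  exact hc.ne (C_eq_zero.1 (hs _ h this))

theorem ext_of_X_sub_C_mem_iff (hP : IsOrderingP P) (hPs : Salient P) (hQ : IsOrderingP Q)
    (hQs : Salient Q) (h : ∀ r, X - C r ∈ P ↔ X - C r ∈ Q) : P = Q := by
  ext f
  induction f using induction_on_real_factors with
  | C c => rw [hP.C_mem_iff hPs, hQ.C_mem_iff hQs]
  | X_sub_C_mul r g hg ih =>
    rw [hP.mul_mem_iff hPs (X_sub_C_ne_zero r) hg, hQ.mul_mem_iff hQs (X_sub_C_ne_zero r) hg, h r,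
      ih]
  | quadratic_mul s t g ht hg ih =>
    have hq := (monic_X_sub_C_sq_add_C s t).ne_zero
    rw [hP.mul_mem_iff hPs hq hg, hQ.mul_mem_iff hQs hq hg, ih,
      iff_true_intro (hP.sq_add_C_mem _ ht.le), iff_true_intro (hQ.sq_add_C_mem _ ht.le)]

theorem eq_Pa_of_mem_of_neg_mem (hP : IsOrderingP P) {a : ℝ} (h₁ : X - C a ∈ P)
    (h₂ : -(X - C a) ∈ P) : P = Pa a := by
  obtain ⟨-, -, -, I, hI, hPI⟩ := id hP
  have hIa : I = RingHom.ker (evalRingHom a) := by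
    have hmax := RingHom.ker_isMaximal_of_surjective (evalRingHom a) fun c => ⟨C c, eval_C⟩
    refine (hmax.eq_of_le hI.ne_top ?_).symm
    rw [ker_evalRingHom, Ideal.span_le, singleton_subset_iff]
    exact (hPI _).2 ⟨h₁, h₂⟩
  have hsupp : ∀ f, f ∈ P ∧ -f ∈ P ↔ f.eval a = 0 := fun f => by
    rw [← hPI, hIa, RingHom.mem_ker, coe_evalRingHom]
  have hPa : Pa a ⊆ P := fun f (hf : 0 ≤ f.eval a) => by
    rw [← add_sub_cancel (C (f.eval a)) f]
    exact hP.add_mem (hP.C_mem hf) ((hsupp _).2 (by simp)).1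
  refine Subset.antisymm (fun f hf => not_lt.1 fun hneg => hneg.ne ((hsupp f).1 ⟨hf, hPa ?_⟩))
    hPa
  simpa [Pa] using hneg.le

theorem salient_of_forall_X_sub_C (hP : IsOrderingP P)
    (h : ∀ a, X - C a ∈ P → -(X - C a) ∉ P) : Salient P := by
  obtain ⟨-, -, -, I, hI, hPI⟩ := id hP
  suffices ∀ f ∈ I, f = 0 from fun f h₁ h₂ => this f ((hPI f).2 ⟨h₁, h₂⟩)
  intro f
  induction f using induction_on_real_factors with
  | C c =>
    intro hc
    by_contra hc0
    exact hI.ne_top (Ideal.eq_top_of_isUnit_mem _ hc (isUnit_C.2 (Ne.isUnit (by simpa using hc0))))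
  | X_sub_C_mul r g hg ih =>
    intro hmem
    rcases hI.mem_or_mem hmem with hr | hg'
    · exact (h r ((hPI _).1 hr).1 ((hPI _).1 hr).2).elim
    · exact absurd (ih hg') hg
  | quadratic_mul s t g ht hg ih =>
    intro hmem
    rcases hI.mem_or_mem hmem with hq | hg'
    · exact (hP.neg_sq_add_C_notMem _ ht ((hPI _).1 hq).2).elim
    · exact absurd (ih hg') hg

end IsOrderingP

section EventuallyNonneg

variable {F : Filter ℝ}

lemma salient_setOf_eventually_nonneg (hF : ∀ s ∈ F, s.Infinite) :
    Salient {f : ℝ[X] | ∀ᶠ x in F, 0 ≤ f.eval x} := fun f h₁ h₂ =>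
  eq_zero_of_infinite_isRoot f <| (hF _ (h₁.and h₂)).mono fun x hx =>
    le_antisymm (by simpa using hx.2) hx.1

lemma isOrderingP_setOf_eventually_nonneg (hF : ∀ s ∈ F, s.Infinite)
    (htot : ∀ f : ℝ[X], (∀ᶠ x in F, 0 ≤ f.eval x) ∨ ∀ᶠ x in F, f.eval x ≤ 0) :
    IsOrderingP {f : ℝ[X] | ∀ᶠ x in F, 0 ≤ f.eval x} := by
  refine .of_salient (fun f hf g hg => ?_) (fun f hf g hg => ?_) (fun f => ?_)
    (salient_setOf_eventually_nonneg hF)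
  · filter_upwards [hf, hg] with x using by simpa using add_nonneg
  · filter_upwards [hf, hg] with x using by simpa using mul_nonneg
  · simpa using htot f

end EventuallyNonneg

lemma PaPlus_eq_setOf_eventually (a : ℝ) :
    PaPlus a = {f : ℝ[X] | ∀ᶠ x in 𝓝[≥] a, 0 ≤ f.eval x} := by
  ext f
  simp only [PaPlus, mem_ofPred_eq, Filter.Eventually, mem_nhdsGE_iff_exists_Icc_subset]
  constructor
  · rintro ⟨ε, hε, h⟩
    exact ⟨a + ε, by linarith, h⟩
  · rintro ⟨u, hu, h⟩
    exact ⟨u - a, sub_pos.2 hu, by rwa [add_sub_cancel]⟩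

lemma Pinf_eq_setOf_eventually : Pinf = {f : ℝ[X] | ∀ᶠ x in atTop, 0 ≤ f.eval x} := by
  ext f
  exact eventually_atTop.symm

lemma infinite_of_mem_nhdsGE {a : ℝ} {s : Set ℝ} (hs : s ∈ 𝓝[≥] a) : s.Infinite := by
  obtain ⟨u, hu, h⟩ := mem_nhdsGE_iff_exists_Icc_subset.1 hs
  exact (Icc_infinite hu).mono h

lemma infinite_of_mem_atTop {s : Set ℝ} (hs : s ∈ atTop) : s.Infinite := by
  obtain ⟨b, h⟩ := mem_atTop_sets.1 hs
  exact (Ici_infinite b).mono h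

lemma eventually_nhdsGE_nonneg_of_eq_mul {f g : ℝ[X]} {a : ℝ} {k : ℕ}
    (hfg : f = (X - C a) ^ k * g) (hg : 0 < g.eval a) : ∀ᶠ x in 𝓝[≥] a, 0 ≤ f.eval x := by
  filter_upwards [self_mem_nhdsWithin,
    nhdsWithin_le_nhds ((g.continuous.tendsto a).eventually (lt_mem_nhds hg))] with x hx hgx
  rw [hfg, eval_mul, eval_pow, eval_sub, eval_X, eval_C]
  exact mul_nonneg (pow_nonneg (sub_nonneg.2 hx) k) hgx.le

/-- Near `a`, on the right, `f = (X - a)ᵏ g` with `g a ≠ 0` has the sign of `g a`. -/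
lemma eventually_nhdsGE_nonneg_or_nonpos (f : ℝ[X]) (a : ℝ) :
    (∀ᶠ x in 𝓝[≥] a, 0 ≤ f.eval x) ∨ ∀ᶠ x in 𝓝[≥] a, f.eval x ≤ 0 := by
  rcases eq_or_ne f 0 with rfl | hf
  · simp
  set g := f /ₘ (X - C a) ^ rootMultiplicity a f
  have hfg : f = (X - C a) ^ rootMultiplicity a f * g :=
    (pow_mul_divByMonic_rootMultiplicity_eq f a).symm
  rcases (eval_divByMonic_pow_rootMultiplicity_ne_zero a hf).lt_or_gt with hneg | hpos
  · right
    have := eventually_nhdsGE_nonneg_of_eq_mul (f := -f) (g := -g) (by rw [hfg, mul_neg])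
      (by simpa using hneg)
    simpa using this
  · exact .inl (eventually_nhdsGE_nonneg_of_eq_mul hfg hpos)

lemma eventually_atTop_nonneg_of_leadingCoeff_nonneg {f : ℝ[X]} (h : 0 ≤ f.leadingCoeff) :
    ∀ᶠ x in atTop, 0 ≤ f.eval x := by
  rcases le_or_gt f.degree 0 with hdeg | hdeg
  · rw [eq_C_of_degree_le_zero hdeg] at h ⊢
    exact .of_forall fun _ => by simpa using h
  · exact (tendsto_atTop_of_leadingCoeff_nonneg f hdeg h).eventually_ge_atTop 0

lemma eventually_atTop_nonneg_or_nonpos (f : ℝ[X]) :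
    (∀ᶠ x in atTop, 0 ≤ f.eval x) ∨ ∀ᶠ x in atTop, f.eval x ≤ 0 := by
  rcases le_total 0 f.leadingCoeff with h | h
  · exact .inl (eventually_atTop_nonneg_of_leadingCoeff_nonneg h)
  · right
    simpa using eventually_atTop_nonneg_of_leadingCoeff_nonneg (f := -f) (by simpa using h)

lemma salient_PaPlus (a : ℝ) : Salient (PaPlus a) :=
  PaPlus_eq_setOf_eventually a ▸ salient_setOf_eventually_nonneg fun _ => infinite_of_mem_nhdsGE

lemma isOrderingP_PaPlus (a : ℝ) : IsOrderingP (PaPlus a) :=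
  PaPlus_eq_setOf_eventually a ▸ isOrderingP_setOf_eventually_nonneg
    (fun _ => infinite_of_mem_nhdsGE) (eventually_nhdsGE_nonneg_or_nonpos · a)

lemma salient_Pinf : Salient Pinf :=
  Pinf_eq_setOf_eventually ▸ salient_setOf_eventually_nonneg fun _ => infinite_of_mem_atTop

lemma isOrderingP_Pinf : IsOrderingP Pinf :=
  Pinf_eq_setOf_eventually ▸ isOrderingP_setOf_eventually_nonneg
    (fun _ => infinite_of_mem_atTop) eventually_atTop_nonneg_or_nonpos

lemma PaMinus_eq_preimage (a : ℝ) : PaMinus a = compRingHom (-X) ⁻¹' PaPlus (-a) := by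
  ext f
  simp only [PaMinus, PaPlus, mem_preimage, coe_compRingHom, mem_ofPred_eq, eval_comp, eval_neg,
    eval_X, mem_Icc]
  constructor
  · rintro ⟨ε, hε, h⟩
    exact ⟨ε, hε, fun x hx => h _ ⟨by linarith, by linarith⟩⟩
  · rintro ⟨ε, hε, h⟩
    exact ⟨ε, hε, fun x hx => by simpa using h (-x) ⟨by linarith, by linarith⟩⟩

lemma PnegInf_eq_preimage : PnegInf = compRingHom (-X) ⁻¹' Pinf := by
  ext f
  simp only [PnegInf, Pinf, mem_preimage, coe_compRingHom, mem_ofPred_eq, eval_comp, eval_neg,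
    eval_X]
  constructor
  · rintro ⟨b, h⟩
    exact ⟨-b, fun x hx => h _ (by linarith)⟩
  · rintro ⟨b, h⟩
    exact ⟨-b, fun x hx => by simpa using h (-x) (by linarith)⟩

lemma salient_PaMinus (a : ℝ) : Salient (PaMinus a) :=
  PaMinus_eq_preimage a ▸ (salient_PaPlus (-a)).preimage compRingHom_neg_X_injective

lemma isOrderingP_PaMinus (a : ℝ) : IsOrderingP (PaMinus a) :=
  PaMinus_eq_preimage a ▸ (isOrderingP_PaPlus (-a)).preimage _

lemma salient_PnegInf : Salient PnegInf :=
  PnegInf_eq_preimage ▸ salient_Pinf.preimage compRingHom_neg_X_injective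

lemma isOrderingP_PnegInf : IsOrderingP PnegInf :=
  PnegInf_eq_preimage ▸ isOrderingP_Pinf.preimage _

lemma isOrderingP_Pa (a : ℝ) : IsOrderingP (Pa a) := by
  refine ⟨fun f hf g hg => ?_, fun f hf g hg => ?_, fun f => ?_, RingHom.ker (evalRingHom a),
    RingHom.ker_isPrime _, fun f => ?_⟩
  · simpa [Pa] using add_nonneg hf hg
  · simpa [Pa] using mul_nonneg hf hg
  · simpa [Pa] using le_total 0 (f.eval a)
  · simp [Pa, le_antisymm_iff, and_comm]

lemma X_sub_C_mem_Pinf (r : ℝ) : X - C r ∈ Pinf :=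
  ⟨r, fun x hx => by simpa using hx⟩

lemma X_sub_C_notMem_PnegInf (r : ℝ) : X - C r ∉ PnegInf := fun ⟨b, h⟩ => by
  have := h (min b (r - 1)) (min_le_left _ _)
  simp only [eval_sub, eval_X, eval_C] at this
  linarith [min_le_right b (r - 1)]

lemma X_sub_C_mem_PaPlus_iff {a r : ℝ} : X - C r ∈ PaPlus a ↔ r ≤ a := by
  refine ⟨fun ⟨ε, hε, h⟩ => by simpa using h a ⟨le_rfl, by linarith⟩, fun hr => ⟨1, one_pos, ?_⟩⟩
  exact fun x hx => by simpa using hr.trans hx.1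

lemma X_sub_C_mem_PaMinus_iff {a r : ℝ} : X - C r ∈ PaMinus a ↔ r < a := by
  refine ⟨fun ⟨ε, hε, h⟩ => ?_, fun hr => ⟨a - r, sub_pos.2 hr, fun x hx => ?_⟩⟩
  · have := h (a - ε) ⟨le_rfl, by linarith⟩
    simp only [eval_sub, eval_X, eval_C] at this
    linarith
  · simpa using (sub_sub_cancel a r).symm.trans_le hx.1

lemma IsLowerSet.eq_univ_or_eq_empty_or_Iic_or_Iio {α : Type*}
    [ConditionallyCompleteLinearOrder α] {L : Set α} (hL : IsLowerSet L) :
    L = univ ∨ L = ∅ ∨ ∃ a, L = Iic a ∨ L = Iio a := by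
  obtain rfl | ⟨d, hd⟩ := eq_or_ne L univ |>.imp_right (ne_univ_iff_exists_notMem L).1
  · exact .inl rfl
  obtain rfl | hne := L.eq_empty_or_nonempty
  · exact .inr (.inl rfl)
  have hbdd : BddAbove L := ⟨d, fun x hx => not_lt.1 fun hdx => hd (hL hdx.le hx)⟩
  have hlt : ∀ x < sSup L, x ∈ L := fun x hx =>
    let ⟨y, hy, hxy⟩ := exists_lt_of_lt_csSup hne hx
    hL hxy.le hy
  refine .inr (.inr ⟨sSup L, ?_⟩)
  by_cases hsup : sSup L ∈ L
  · exact .inl (Subset.antisymm (fun x hx => le_csSup hbdd hx) fun x hx => hL hx hsup)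
  · refine .inr (Subset.antisymm (fun x hx => (le_csSup hbdd hx).lt_of_ne ?_) hlt)
    rintro rfl
    exact hsup hx

theorem IsOrderingP.eq_of_salient {P : Set ℝ[X]} (hP : IsOrderingP P) (hs : Salient P) :
    (∃ a, P = PaPlus a ∨ P = PaMinus a) ∨ P = Pinf ∨ P = PnegInf := by
  have hL : IsLowerSet {r | X - C r ∈ P} := fun r r' hr' hr => by
    have : X - C r' = X - C r + C (r - r') := by rw [C_sub]; ring
    rw [mem_ofPred_eq, this]
    exact hP.add_mem hr (hP.C_mem (sub_nonneg.2 hr'))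
  have key {Q} := @IsOrderingP.ext_of_X_sub_C_mem_iff P Q hP hs
  rcases hL.eq_univ_or_eq_empty_or_Iic_or_Iio with h | h | ⟨a, h | h⟩ <;>
    simp only [Set.ext_iff, mem_ofPred_eq, mem_univ, mem_empty_iff_false, mem_Iic, mem_Iio] at h
  · exact .inr (.inl (key isOrderingP_Pinf salient_Pinf fun r => by simp [h, X_sub_C_mem_Pinf]))
  · exact .inr (.inr (key isOrderingP_PnegInf salient_PnegInf fun r => by
      simp [h, X_sub_C_notMem_PnegInf]))
  · exact .inl ⟨a, .inl (key (isOrderingP_PaPlus a) (salient_PaPlus a) fun r => by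
      rw [h, X_sub_C_mem_PaPlus_iff])⟩
  · exact .inl ⟨a, .inr (key (isOrderingP_PaMinus a) (salient_PaMinus a) fun r => by
      rw [h, X_sub_C_mem_PaMinus_iff])⟩

/-- Classification of the orderings of `ℝ[T]`: each of `P_a`, `P_{a+}`, `P_{a-}`,
`P_∞`, `P_{-∞}` is an ordering, and every ordering of `ℝ[T]` is one of them. -/
theorem stmt_6 :
    (∀ a : ℝ, IsOrderingP (Pa a) ∧ IsOrderingP (PaPlus a) ∧ IsOrderingP (PaMinus a)) ∧
    IsOrderingP Pinf ∧ IsOrderingP PnegInf ∧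
    (∀ P : Set (Polynomial ℝ), IsOrderingP P →
      (∃ a : ℝ, P = Pa a ∨ P = PaPlus a ∨ P = PaMinus a) ∨ P = Pinf ∨ P = PnegInf) := by
  refine ⟨fun a => ⟨isOrderingP_Pa a, isOrderingP_PaPlus a, isOrderingP_PaMinus a⟩,
    isOrderingP_Pinf, isOrderingP_PnegInf, fun P hP => ?_⟩
  by_cases h : ∃ a, X - C a ∈ P ∧ -(X - C a) ∈ P
  · obtain ⟨a, h₁, h₂⟩ := h
    exact .inl ⟨a, .inl (hP.eq_Pa_of_mem_of_neg_mem h₁ h₂)⟩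
  · push Not at h
    obtain ⟨a, h | h⟩ | h := hP.eq_of_salient (hP.salient_of_forall_X_sub_C h)
    exacts [.inl ⟨a, .inr (.inl h)⟩, .inl ⟨a, .inr (.inr h)⟩, .inr h]
end

section
/- Let K be a real closed field with a nontrivial non-archimedean absolute value compatible with its order, and let S ⊆ Kⁿ be a semialgebraic set. For σ ∈ {1,−1,0}ⁿ, let S^σ = { x ∈ S : sgn(x_i) = σ_i for all i }, and let trop_r : Kⁿ → ℝⁿ, x ↦ (sgn(x_1)|x_1|, …, sgn(x_n)|x_n|). Then trop_r(S^σ) = trop_r(cl(S^σ)) ∩ ℝ^σ, where cl denotes closure in the order topology of Kⁿ and ℝ^σ = { y ∈ ℝⁿ : sgn(y_i) = σ_i }. -/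
/-- The sign of an element of a linearly ordered field, as a real number. -/
noncomputable def sgnR {K : Type*} [Field K] [LinearOrder K] [IsStrictOrderedRing K] (x : K) : ℝ :=
  if 0 < x then 1 else if x < 0 then -1 else 0

/-- Semialgebraic subsets of `Kⁿ`: finite boolean combinations of sets
`{x : f(x) > 0}` for polynomials `f`. -/
inductive IsSA {K : Type*} [Field K] [LinearOrder K] [IsStrictOrderedRing K] {n : ℕ} : Set (Fin n → K) → Prop
  | basic (f : MvPolynomial (Fin n) K) : IsSA {x | 0 < MvPolynomial.eval x f}
  | compl {s : Set (Fin n → K)} : IsSA s → IsSA sᶜ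
  | union {s t : Set (Fin n → K)} : IsSA s → IsSA t → IsSA (s ∪ t)

/-!
Near a point `x`, every coordinate `x i ≠ 0` keeps its absolute value: by compatibility with the
order, `v (z i - x i) ≤ v ε` on an order-box of radius `ε`, and choosing `ε > 0` with
`v ε < v (x i)` (possible because `v` is nontrivial) the ultrametric inequality forces
`v (z i) = v (x i)`. So a point of the closure of `S^σ` whose signed tropicalization lies in
`ℝ^σ` has the same signs and absolute values as nearby points of `S^σ`, hence the same image.
-/

open Filter Topology Set

section sgnR

variable {K : Type*} [Field K] [LinearOrder K] [IsStrictOrderedRing K]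

lemma sgnR_eq_zero_iff (a : K) : sgnR a = 0 ↔ a = 0 := by
  unfold sgnR
  split_ifs with h₁ h₂
  · exact iff_of_false one_ne_zero h₁.ne'
  · exact iff_of_false (by norm_num) h₂.ne
  · exact iff_of_true rfl (le_antisymm (not_lt.mp h₁) (not_lt.mp h₂))

lemma sgnR_sgnR_mul_of_pos (a : K) {t : ℝ} (ht : 0 < t) : sgnR (sgnR a * t) = sgnR a := by
  unfold sgnR
  rcases lt_trichotomy 0 a with h | rfl | h
  · simp [h, ht]
  · simp
  · simp [h, h.not_gt, ht, ht.not_gt]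

end sgnR

namespace AbsoluteValue

def ofIsNonarchimedean {R S : Type*} [Semiring R] [Semiring S] [LinearOrder S]
    [IsStrictOrderedRing S] (v : R → S) (nonneg : ∀ a, 0 ≤ v a)
    (eq_zero : ∀ a, v a = 0 ↔ a = 0) (map_mul : ∀ a b, v (a * b) = v a * v b)
    (hna : IsNonarchimedean v) : AbsoluteValue R S where
  toFun := v
  map_mul' := map_mul
  nonneg' := nonneg
  eq_zero' := eq_zero
  add_le' _ _ := hna.add_le nonneg

lemma apply_abs {R S : Type*} [Ring R] [LinearOrder R] [CommRing S] [PartialOrder S]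
    [IsOrderedRing S] [NoZeroDivisors S] (v : AbsoluteValue R S) (a : R) : v |a| = v a := by
  rcases abs_choice a with h | h <;> simp [h]

variable {K : Type*} [Field K] [LinearOrder K] [IsStrictOrderedRing K] {v : AbsoluteValue K ℝ}

lemma IsNontrivial.exists_pos_apply_lt (hv : v.IsNontrivial) {δ : ℝ} (hδ : 0 < δ) :
    ∃ ε : K, 0 < ε ∧ v ε < δ := by
  obtain ⟨c, hc₀, hc₁⟩ := hv.exists_abv_lt_one
  obtain ⟨k, hk⟩ := exists_pow_lt_of_lt_one hδ hc₁
  exact ⟨|c| ^ k, pow_pos (abs_pos.mpr hc₀) k, by rwa [map_pow, apply_abs]⟩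

lemma apply_le_of_abs_le (hmono : MonotoneOn v (Ici 0)) {a b : K} (h : |a| ≤ b) :
    v a ≤ v b :=
  v.apply_abs a ▸ hmono (abs_nonneg a) ((abs_nonneg a).trans h) h

variable [TopologicalSpace K] [OrderTopology K]

lemma eventually_apply_eq (hna : IsNonarchimedean v) (hv : v.IsNontrivial)
    (hmono : MonotoneOn v (Ici 0)) {a : K} (ha : a ≠ 0) : ∀ᶠ b in 𝓝 a, v b = v a := by
  obtain ⟨ε, hε, hεa⟩ := hv.exists_pos_apply_lt (v.pos ha)
  filter_upwards [Ioo_mem_nhds (sub_lt_self a hε) (lt_add_of_pos_right a hε)] with b hb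
  have hdist : |b - a| < ε := abs_sub_lt_iff.mpr ⟨by linarith [hb.2], by linarith [hb.1]⟩
  have hba : v (b - a) < v a := (apply_le_of_abs_le hmono hdist.le).trans_lt hεa
  simpa using hna.add_eq_left_of_lt hba

lemma eventually_apply_pi_eq {ι : Type*} [Finite ι] (hna : IsNonarchimedean v)
    (hv : v.IsNontrivial) (hmono : MonotoneOn v (Ici 0)) (x : ι → K) :
    ∀ᶠ z in 𝓝 x, ∀ i, x i ≠ 0 → v (z i) = v (x i) := by
  refine eventually_all.mpr fun i => ?_
  by_cases hx : x i = 0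
  · exact Eventually.of_forall fun _ h => absurd hx h
  · exact (((continuous_apply i).tendsto x).eventually
      (eventually_apply_eq hna hv hmono hx)).mono fun _ hz _ => hz

end AbsoluteValue

section signedTrop

variable {K : Type*} [Field K] [LinearOrder K] [IsStrictOrderedRing K] {ι : Type*}

noncomputable def signedTrop (v : AbsoluteValue K ℝ) (x : ι → K) : ι → ℝ :=
  fun i => sgnR (x i) * v (x i)

lemma sgnR_signedTrop (v : AbsoluteValue K ℝ) (x : ι → K) (i : ι) :
    sgnR (signedTrop v x i) = sgnR (x i) := by
  by_cases hx : x i = 0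
  · simp [signedTrop, hx, sgnR]
  · exact sgnR_sgnR_mul_of_pos _ (v.pos hx)

theorem image_signedTrop_eq_image_closure_inter [TopologicalSpace K] [OrderTopology K] [Finite ι]
    {v : AbsoluteValue K ℝ} (hna : IsNonarchimedean v) (hv : v.IsNontrivial)
    (hmono : MonotoneOn v (Ici 0)) {T : Set (ι → K)} {σ : ι → ℝ}
    (hT : ∀ x ∈ T, ∀ i, sgnR (x i) = σ i) :
    signedTrop v '' T = signedTrop v '' closure T ∩ {y | ∀ i, sgnR (y i) = σ i} := by
  ext y
  constructor
  · rintro ⟨x, hx, rfl⟩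
    exact ⟨⟨x, subset_closure hx, rfl⟩, fun i => (sgnR_signedTrop v x i).trans (hT x hx i)⟩
  · rintro ⟨⟨x, hx, rfl⟩, hy⟩
    obtain ⟨z, hzx, hzT⟩ := ((v.eventually_apply_pi_eq hna hv hmono x).and_frequently
      (mem_closure_iff_frequently.mp hx)).exists
    refine ⟨z, hzT, funext fun i => ?_⟩
    have hsgn : sgnR (z i) = sgnR (x i) :=
      (hT z hzT i).trans ((hy i).symm.trans (sgnR_signedTrop v x i))
    by_cases hx0 : x i = 0
    · have hz0 : z i = 0 := (sgnR_eq_zero_iff _).mp (hsgn.trans ((sgnR_eq_zero_iff _).mpr hx0))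
      simp [signedTrop, hx0, hz0]
    · simp only [signedTrop, hsgn, hzx i hx0]

end signedTrop

theorem stmt_9_general {K : Type*} [Field K] [LinearOrder K] [IsStrictOrderedRing K] [TopologicalSpace K] [OrderTopology K]
    (v : K → ℝ)
    (hnonneg : ∀ a, 0 ≤ v a) (hzero : ∀ a, v a = 0 ↔ a = 0)
    (hmul : ∀ a b, v (a * b) = v a * v b)
    (hna : ∀ a b, v (a + b) ≤ max (v a) (v b))
    (hcomp : ∀ a b : K, 0 ≤ a → a ≤ b → v a ≤ v b)
    (hnt : ∃ a : K, v a ≠ 0 ∧ v a ≠ 1)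
    {n : ℕ} (S : Set (Fin n → K))
    (σ : Fin n → ℝ) :
    let tropr : (Fin n → K) → (Fin n → ℝ) := fun x i => sgnR (x i) * v (x i)
    let Sσ : Set (Fin n → K) := {x | x ∈ S ∧ ∀ i, sgnR (x i) = σ i}
    let Rσ : Set (Fin n → ℝ) := {y | ∀ i, sgnR (y i) = σ i}
    tropr '' Sσ = (tropr '' closure Sσ) ∩ Rσ := by
  intro tropr Sσ Rσ
  let w := AbsoluteValue.ofIsNonarchimedean v hnonneg hzero hmul hna
  have hw : w.IsNontrivial := by
    obtain ⟨a, ha₀, ha₁⟩ := hnt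
    exact ⟨a, fun h => ha₀ ((hzero a).mpr h), ha₁⟩
  exact image_signedTrop_eq_image_closure_inter (v := w) hna hw
    (fun a ha b _ hab => hcomp a b ha hab) fun _ hx => hx.2

/-- For a semialgebraic `S ⊆ Kⁿ` over a real closed field `K` with a nontrivial
compatible non-archimedean absolute value, and a sign vector `σ`,
`trop_r(S^σ) = trop_r(cl(S^σ)) ∩ ℝ^σ`. -/
theorem stmt_9 {K : Type*} [Field K] [LinearOrder K] [IsStrictOrderedRing K] [TopologicalSpace K] [OrderTopology K]
    (hsq : ∀ x : K, 0 ≤ x → ∃ y : K, y ^ 2 = x)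
    (hodd : ∀ p : Polynomial K, Odd p.natDegree → ∃ x : K, p.eval x = 0)
    (v : K → ℝ)
    (hnonneg : ∀ a, 0 ≤ v a) (hzero : ∀ a, v a = 0 ↔ a = 0)
    (hmul : ∀ a b, v (a * b) = v a * v b)
    (hna : ∀ a b, v (a + b) ≤ max (v a) (v b))
    (hcomp : ∀ a b : K, 0 ≤ a → a ≤ b → v a ≤ v b)
    (hnt : ∃ a : K, v a ≠ 0 ∧ v a ≠ 1)
    {n : ℕ} (S : Set (Fin n → K)) (hS : IsSA S)
    (σ : Fin n → ℝ) (hσ : ∀ i, σ i = 1 ∨ σ i = -1 ∨ σ i = 0) :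
    let tropr : (Fin n → K) → (Fin n → ℝ) := fun x i => sgnR (x i) * v (x i)
    let Sσ : Set (Fin n → K) := {x | x ∈ S ∧ ∀ i, sgnR (x i) = σ i}
    let Rσ : Set (Fin n → ℝ) := {y | ∀ i, sgnR (y i) = σ i}
    tropr '' Sσ = (tropr '' closure Sσ) ∩ Rσ :=
  stmt_9_general v hnonneg hzero hmul hna hcomp hnt S σ
end

section
/- Let K be an ordered field with a compatible non-archimedean absolute value and let A be a commutative K-algebra generated by f_1, …, f_n. Identify the set M_r(A) of signed K-seminorms on A with a subset of the product ∏_{f ∈ A} ℝ via x ↦ (|f|ˢ_x)_{f ∈ A}, with the product topology. Then for any compact B ⊆ ℝⁿ, the set { x ∈ M_r(A) : (|f_1|ˢ_x, …, |f_n|ˢ_x) ∈ B } is compact. In other words, the tropicalization map M_r(A) → ℝⁿ, x ↦ (|f_i|ˢ_x)_i, is proper. -/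
/-- A signed `K`-seminorm on a `K`-algebra `A`, for `K` an ordered field with
absolute value `v`. -/
def IsSignedSeminormK {K A : Type*} [Field K] [LinearOrder K] [IsStrictOrderedRing K] [CommRing A] [Algebra K A]
    (v : K → ℝ) (s : A → ℝ) : Prop :=
  (∀ a : K, s (algebraMap K A a) = sgnR a * v a) ∧
  (∀ f g : A, s (f * g) = s f * s g) ∧
  (∀ f g : A, min (s f) (s g) ≤ s (f + g) ∧ s (f + g) ≤ max (s f) (s g))

theorem isCompact_of_isClosed_of_forall_abs_le {ι : Type*} {S : Set (ι → ℝ)} (hS : IsClosed S)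
    (C : ι → ℝ) (hC : ∀ s ∈ S, ∀ i, |s i| ≤ C i) : IsCompact S :=
  (isCompact_univ_pi fun _ => isCompact_Icc).of_isClosed_subset hS
    fun s hs i _ => abs_le.mp (hC s hs i)

section SignedSeminorm

variable {K A : Type*} [Field K] [LinearOrder K] [IsStrictOrderedRing K] [CommRing A]
  [Algebra K A] {v : K → ℝ}

theorem abs_sgnR_le_one (x : K) : |sgnR x| ≤ 1 := by
  unfold sgnR
  split_ifs <;> simp

theorem isClosed_setOf_isSignedSeminormK (v : K → ℝ) :
    IsClosed {s : A → ℝ | IsSignedSeminormK v s} := by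
  have hset : {s : A → ℝ | IsSignedSeminormK v s} =
      (⋂ a : K, {s | s (algebraMap K A a) = sgnR a * v a}) ∩
      ((⋂ f : A, ⋂ g : A, {s | s (f * g) = s f * s g}) ∩
       (⋂ f : A, ⋂ g : A,
          ({s | min (s f) (s g) ≤ s (f + g)} ∩ {s | s (f + g) ≤ max (s f) (s g)}))) := by
    ext s
    simp only [IsSignedSeminormK, Set.mem_ofPred_eq, Set.mem_inter_iff, Set.mem_iInter, forall_and]
  rw [hset]
  refine (isClosed_iInter fun a => isClosed_eq (continuous_apply _) continuous_const).inter
    ((isClosed_iInter fun f => isClosed_iInter fun g => ?_).inter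
      (isClosed_iInter fun f => isClosed_iInter fun g => .inter ?_ ?_))
  · exact isClosed_eq (continuous_apply _) ((continuous_apply f).mul (continuous_apply g))
  · exact isClosed_le ((continuous_apply f).min (continuous_apply g)) (continuous_apply _)
  · exact isClosed_le (continuous_apply _) ((continuous_apply f).max (continuous_apply g))

namespace IsSignedSeminormK

variable {s : A → ℝ}

theorem abs_algebraMap_le (hs : IsSignedSeminormK v s) (a : K) :
    |s (algebraMap K A a)| ≤ |v a| := by
  rw [hs.1 a, abs_mul]
  exact mul_le_of_le_one_left (abs_nonneg _) (abs_sgnR_le_one a)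

theorem abs_mul (hs : IsSignedSeminormK v s) (f g : A) : |s (f * g)| = |s f| * |s g| := by
  rw [hs.2.1 f g, _root_.abs_mul]

theorem abs_add_le_max (hs : IsSignedSeminormK v s) (f g : A) :
    |s (f + g)| ≤ max |s f| |s g| := by
  obtain ⟨hmin, hmax⟩ := hs.2.2 f g
  refine abs_le.mpr ⟨le_trans (le_min ?_ ?_) hmin,
    hmax.trans (max_le_max (le_abs_self _) (le_abs_self _))⟩
  · exact neg_le.mpr ((neg_le_abs _).trans (le_max_left _ _))
  · exact neg_le.mpr ((neg_le_abs _).trans (le_max_right _ _))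

theorem exists_forall_abs_le_of_mem_adjoin {S : Set (A → ℝ)}
    (hS : ∀ s ∈ S, IsSignedSeminormK v s) {T : Set A}
    (hT : ∀ x ∈ T, ∃ C, ∀ s ∈ S, |s x| ≤ C) {g : A} (hg : g ∈ Algebra.adjoin K T) :
    ∃ C, ∀ s ∈ S, |s g| ≤ C := by
  induction hg using Algebra.adjoin_induction with
  | mem x hx => exact hT x hx
  | algebraMap a => exact ⟨|v a|, fun s hs => (hS s hs).abs_algebraMap_le a⟩
  | add x y _ _ ihx ihy =>
    obtain ⟨C₁, h₁⟩ := ihx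
    obtain ⟨C₂, h₂⟩ := ihy
    exact ⟨max C₁ C₂, fun s hs =>
      ((hS s hs).abs_add_le_max x y).trans (max_le_max (h₁ s hs) (h₂ s hs))⟩
  | mul x y _ _ ihx ihy =>
    obtain ⟨C₁, h₁⟩ := ihx
    obtain ⟨C₂, h₂⟩ := ihy
    refine ⟨C₁ * C₂, fun s hs => ?_⟩
    rw [(hS s hs).abs_mul x y]
    exact mul_le_mul (h₁ s hs) (h₂ s hs) (abs_nonneg _) ((abs_nonneg _).trans (h₁ s hs))

end IsSignedSeminormK

end SignedSeminorm

theorem stmt_12_general {K A : Type*} [Field K] [LinearOrder K] [IsStrictOrderedRing K] [CommRing A] [Algebra K A]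
    (v : K → ℝ)
    (n : ℕ) (f : Fin n → A) (hgen : Algebra.adjoin K (Set.range f) = ⊤)
    (B : Set (Fin n → ℝ)) (hB : IsCompact B) :
    IsCompact {s : A → ℝ | IsSignedSeminormK v s ∧ (fun i => s (f i)) ∈ B} := by
  set S := {s : A → ℝ | IsSignedSeminormK v s ∧ (fun i => s (f i)) ∈ B}
  have hclosed : IsClosed S := (isClosed_setOf_isSignedSeminormK v).inter
    (hB.isClosed.preimage (continuous_pi fun i => continuous_apply (f i)))
  obtain ⟨R, hR⟩ := hB.isBounded.exists_norm_le
  have hgen_bdd : ∀ x ∈ Set.range f, ∃ C, ∀ s ∈ S, |s x| ≤ C := by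
    rintro _ ⟨i, rfl⟩
    exact ⟨R, fun s hs => (norm_le_pi_norm (fun j => s (f j)) i).trans (hR _ hs.2)⟩
  have hbdd (g : A) : ∃ C, ∀ s ∈ S, |s g| ≤ C :=
    IsSignedSeminormK.exists_forall_abs_le_of_mem_adjoin (fun s hs => hs.1) hgen_bdd
      (hgen ▸ Algebra.mem_top)
  choose C hC using hbdd
  exact isCompact_of_isClosed_of_forall_abs_le hclosed C fun s hs g => hC g s hs

/-- If `f₁, …, fₙ` generate the `K`-algebra `A`, then the tropicalization map
`M_r(A) → ℝⁿ`, `x ↦ (|fᵢ|ˢ_x)ᵢ`, is proper: the preimage of any compact `B ⊆ ℝⁿ`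
is compact (with `M_r(A)` topologized as a subspace of `∏_{f ∈ A} ℝ`). -/
theorem stmt_12 {K A : Type*} [Field K] [LinearOrder K] [IsStrictOrderedRing K] [CommRing A] [Algebra K A]
    (v : K → ℝ)
    (hnonneg : ∀ a, 0 ≤ v a)
    (hmul : ∀ a b, v (a * b) = v a * v b)
    (hna : ∀ a b, v (a + b) ≤ max (v a) (v b))
    (hcomp : ∀ a b : K, 0 ≤ a → a ≤ b → v a ≤ v b)
    (n : ℕ) (f : Fin n → A) (hgen : Algebra.adjoin K (Set.range f) = ⊤)
    (B : Set (Fin n → ℝ)) (hB : IsCompact B) :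
    IsCompact {s : A → ℝ | IsSignedSeminormK v s ∧ (fun i => s (f i)) ∈ B} :=
  stmt_12_general v n f hgen B hB
end

section
/- Define the real tropical hyperfield addition on ℝ by: a ⊕ b = a if |a| > |b|; a ⊕ b = b if |a| < |b|; a ⊕ b = {a} if a = b; and a ⊕ b = [−|a|, |a|] (the closed interval) if a = −b. Let K be an ordered field with a compatible non-archimedean absolute value and define τ : K → ℝ by τ(x) = sgn(x)·|x|. Then for all x, y ∈ K, τ(x + y) ∈ τ(x) ⊕ τ(y), and τ(x·y) = τ(x)·τ(y). -/
/-- The (multivalued) addition of the real tropical hyperfield `ℝ𝕋`. -/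
noncomputable def rtAdd (a b : ℝ) : Set ℝ :=
  if |b| < |a| then {a}
  else if |a| < |b| then {b}
  else if a = b then {a}
  else Set.Icc (-|a|) |a|

theorem rtAdd_comm (a b : ℝ) : rtAdd a b = rtAdd b a := by
  unfold rtAdd
  split_ifs <;> first | rfl | grind

theorem mem_rtAdd_of_abs_lt {a b : ℝ} (h : |b| < |a|) : a ∈ rtAdd a b := by
  simp [rtAdd, h]

theorem mem_rtAdd_self (a : ℝ) : a ∈ rtAdd a a := by
  simp [rtAdd]

theorem mem_rtAdd_neg {a c : ℝ} (h : |c| ≤ |a|) : c ∈ rtAdd a (-a) := by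
  unfold rtAdd
  split_ifs with h₁ h₂ h₃
  · simp at h₁
  · simp at h₂
  · obtain rfl : a = 0 := by linarith
    simpa using h
  · exact abs_le.mp h

section sgnR

variable {K : Type*} [Field K] [LinearOrder K] [IsStrictOrderedRing K]

theorem sgnR_eq_sign (x : K) : sgnR x = (SignType.sign x : ℝ) := by
  rw [sgnR, sign_apply]
  split_ifs <;> simp

theorem sgnR_mul (x y : K) : sgnR (x * y) = sgnR x * sgnR y := by
  simp [sgnR_eq_sign, sign_mul]

theorem sgnR_neg (x : K) : sgnR (-x) = -sgnR x := by
  simp [sgnR_eq_sign, Left.sign_neg]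

theorem sgnR_of_pos {x : K} (h : 0 < x) : sgnR x = 1 := by
  simp [sgnR, h]

end sgnR

def AbsoluteValue.ofIsNonarchimedean_s14 {R S : Type*} [Semiring R] [Semiring S] [LinearOrder S]
    [IsStrictOrderedRing S] (v : R → S) (nonneg : ∀ a, 0 ≤ v a) (eq_zero : ∀ a, v a = 0 ↔ a = 0)
    (map_mul : ∀ a b, v (a * b) = v a * v b) (hna : IsNonarchimedean v) : AbsoluteValue R S where
  toFun := v
  map_mul' := map_mul
  nonneg' := nonneg
  eq_zero' := eq_zero
  add_le' _ _ := hna.add_le nonneg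

namespace AbsoluteValue

variable {K : Type*} [Field K] [LinearOrder K] [IsStrictOrderedRing K] (abv : AbsoluteValue K ℝ)

noncomputable def signedValue (x : K) : ℝ := sgnR x * abv x

theorem abs_signedValue (x : K) : |abv.signedValue x| = abv x := by
  rcases eq_or_ne x 0 with rfl | hx
  · simp [signedValue]
  · rw [signedValue, abs_mul, abs_of_nonneg (abv.nonneg x), sgnR]
    rcases hx.lt_or_gt with hx | hx <;> simp [hx, hx.not_gt]

theorem signedValue_mul (x y : K) :
    abv.signedValue (x * y) = abv.signedValue x * abv.signedValue y := by
  simp only [signedValue, sgnR_mul, map_mul]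
  ring

theorem signedValue_neg (x : K) : abv.signedValue (-x) = -abv.signedValue x := by
  simp [signedValue, sgnR_neg]

theorem signedValue_of_pos {x : K} (hx : 0 < x) : abv.signedValue x = abv x := by
  simp [signedValue, sgnR_of_pos hx]

theorem pos_of_signedValue_pos {x : K} (h : 0 < abv.signedValue x) : 0 < x := by
  unfold signedValue sgnR at h
  split_ifs at h with hpos
  · exact hpos
  · linarith [abv.nonneg x]
  · simp at h

section Compatible

variable {abv} (hna : IsNonarchimedean abv) (hmono : MonotoneOn abv (Set.Ici 0))
include hmono

theorem add_pos_of_abv_lt {a b : K} (ha : 0 < a) (h : abv b < abv a) : 0 < a + b := by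
  by_contra! hab
  have : abv a ≤ abv (-b) := hmono ha.le (ha.le.trans (by linarith)) (by linarith)
  rw [abv.map_neg] at this
  linarith

include hna

theorem signedValue_add_of_abv_lt {a b : K} (h : abv b < abv a) :
    abv.signedValue (a + b) = abv.signedValue a := by
  have key {a b : K} (ha : 0 < a) (h : abv b < abv a) :
      abv.signedValue (a + b) = abv.signedValue a := by
    rw [signedValue_of_pos _ ha, signedValue_of_pos _ (add_pos_of_abv_lt hmono ha h),
      hna.add_eq_left_of_lt h]
  rcases lt_trichotomy a 0 with ha | rfl | ha
  · have := key (b := -b) (neg_pos.2 ha) (by simpa using h)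
    rwa [← neg_add, signedValue_neg, signedValue_neg, neg_inj] at this
  · exact absurd h (by simp)
  · exact key ha h

theorem signedValue_add_of_signedValue_eq {a b : K} (h : abv.signedValue b = abv.signedValue a) :
    abv.signedValue (a + b) = abv.signedValue a := by
  have key {a b : K} (ha : 0 < a) (h : abv.signedValue b = abv.signedValue a) :
      abv.signedValue (a + b) = abv.signedValue a := by
    have hb : 0 < b :=
      abv.pos_of_signedValue_pos (by rw [h, signedValue_of_pos _ ha]; exact abv.pos ha.ne')
    rw [signedValue_of_pos _ hb, signedValue_of_pos _ ha] at h
    rw [signedValue_of_pos _ ha, signedValue_of_pos _ (add_pos ha hb)]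
    exact le_antisymm ((hna a b).trans (by simp [h]))
      (hmono ha.le (add_pos ha hb).le (le_add_of_nonneg_right hb.le))
  rcases lt_trichotomy a 0 with ha | rfl | ha
  · have := key (b := -b) (neg_pos.2 ha) (by simpa [signedValue_neg] using h)
    rwa [← neg_add, signedValue_neg, signedValue_neg, neg_inj] at this
  · have : abv b = 0 := by rw [← abs_signedValue, h]; simp [signedValue]
    simp [abv.eq_zero.mp this]
  · exact key ha h

theorem signedValue_add_mem_rtAdd (x y : K) :
    abv.signedValue (x + y) ∈ rtAdd (abv.signedValue x) (abv.signedValue y) := by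
  rcases lt_trichotomy (abv y) (abv x) with h | h | h
  · rw [signedValue_add_of_abv_lt hna hmono h]
    exact mem_rtAdd_of_abs_lt (by simpa [abs_signedValue])
  · rcases abs_eq_abs.mp (by simp [abs_signedValue, h] :
        |abv.signedValue y| = |abv.signedValue x|) with h' | h'
    · rw [h', signedValue_add_of_signedValue_eq hna hmono h']
      exact mem_rtAdd_self _
    · rw [h']
      refine mem_rtAdd_neg ?_
      rw [abs_signedValue, abs_signedValue]
      exact (hna x y).trans (by simp [h])
  · rw [rtAdd_comm, add_comm, signedValue_add_of_abv_lt hna hmono h]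
    exact mem_rtAdd_of_abs_lt (by simpa [abs_signedValue])

end Compatible

end AbsoluteValue

/-- For an ordered field `K` with compatible non-archimedean absolute value, the
signed value map `τ(x) = sgn(x)·|x|` is a hyperfield morphism `K → ℝ𝕋`:
`τ(x+y) ∈ τ(x) ⊕ τ(y)` and `τ(xy) = τ(x)·τ(y)`. -/
theorem stmt_14 {K : Type*} [Field K] [LinearOrder K] [IsStrictOrderedRing K] (v : K → ℝ)
    (hnonneg : ∀ a, 0 ≤ v a) (hzero : ∀ a, v a = 0 ↔ a = 0)
    (hmul : ∀ a b, v (a * b) = v a * v b)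
    (hna : ∀ a b, v (a + b) ≤ max (v a) (v b))
    (hcomp : ∀ a b : K, 0 ≤ a → a ≤ b → v a ≤ v b)
    (x y : K) :
    (sgnR (x + y) * v (x + y)) ∈ rtAdd (sgnR x * v x) (sgnR y * v y) ∧
    sgnR (x * y) * v (x * y) = (sgnR x * v x) * (sgnR y * v y) := by
  let abv := AbsoluteValue.ofIsNonarchimedean_s14 v hnonneg hzero hmul hna
  have hmono : MonotoneOn abv (Set.Ici 0) := fun a ha b _ hab => hcomp a b ha hab
  exact ⟨abv.signedValue_add_mem_rtAdd hna hmono x y, abv.signedValue_mul x y⟩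
end

section
/- Let S be the complement of the positive orthant in Kⁿ (n ≥ 2), where K is a real closed field with a compatible non-archimedean absolute value whose signed value map is surjective onto ℝ. Let F be a real tropical polynomial over ℝ𝕋 (coefficients in ℝ, monomials with nonnegative integer exponents). If the set {F < 0} := { y ∈ ℝⁿ : F(y) is a single negative real number } is contained in the strictly positive orthant ℝ_{>0}ⁿ, then {F < 0} is empty. Concretely: if y ∈ ℝⁿ has all coordinates nonzero and the unique maximum-absolute-value term of F at y is c·y₁^{a₁}···y_n^{a_n} < 0, then at least one of the sign-flipped points obtained by negating some coordinates of y makes that same term positive while it remains the unique maximum in absolute value, so y cannot be forced into the positive orthant. -/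
/-!
Negating a set `s` of coordinates multiplies the monomial `y ^ I` by `(-1) ^ ∑_{i ∈ s} I i` and
leaves every absolute value unchanged, so a dominant negative term stays dominant and negative
whenever `∑_{i ∈ s} I i` is even. If `{F < 0}` lies in the positive orthant, no such flip of a
nonempty `s` is allowed, so `I i`, `I j` and `I i + I j` would all be odd for `i ≠ j`.
-/

open Finset

variable {ι : Type*} [Fintype ι]

theorem prod_pow_piecewise_neg [DecidableEq ι] {R : Type*} [CommRing R] (s : Finset ι)
    (y : ι → R) (I : ι → ℕ) :
    ∏ i, s.piecewise (-y) y i ^ I i = (-1) ^ (∑ i ∈ s, I i) * ∏ i, y i ^ I i := by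
  have hpow : ∀ i, s.piecewise (-y) y i ^ I i =
      (if i ∈ s then (-1 : R) ^ I i else 1) * y i ^ I i := by
    intro i
    by_cases hi : i ∈ s
    · rw [piecewise_eq_of_mem _ _ _ hi, if_pos hi, Pi.neg_apply, neg_pow]
    · rw [piecewise_eq_of_notMem _ _ _ hi, if_neg hi, one_mul]
  simp_rw [hpow, prod_mul_distrib, prod_ite_mem, univ_inter, prod_pow_eq_pow_sum]

namespace TropicalPolynomial

variable (c : (ι → ℕ) → ℝ)

def term (I : ι → ℕ) (y : ι → ℝ) : ℝ := c I * ∏ i, y i ^ I i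

def IsDominantNegTerm (I : ι → ℕ) (y : ι → ℝ) : Prop :=
  c I ≠ 0 ∧ term c I y < 0 ∧ ∀ J, J ≠ I → c J ≠ 0 → |term c J y| < |term c I y|

/-- The set `{F < 0}`. -/
def negSet : Set (ι → ℝ) := {y | ∃ I, IsDominantNegTerm c I y}

variable {c} [DecidableEq ι]

theorem term_piecewise_neg (s : Finset ι) (I : ι → ℕ) (y : ι → ℝ) :
    term c I (s.piecewise (-y) y) = (-1) ^ (∑ i ∈ s, I i) * term c I y := by
  rw [term, term, prod_pow_piecewise_neg]
  ring

theorem abs_term_piecewise_neg (s : Finset ι) (I : ι → ℕ) (y : ι → ℝ) :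
    |term c I (s.piecewise (-y) y)| = |term c I y| := by
  rw [term_piecewise_neg, abs_mul, abs_pow, abs_neg, abs_one, one_pow, one_mul]

theorem IsDominantNegTerm.piecewise_neg {I : ι → ℕ} {y : ι → ℝ} (h : IsDominantNegTerm c I y)
    {s : Finset ι} (hs : Even (∑ i ∈ s, I i)) :
    IsDominantNegTerm c I (s.piecewise (-y) y) := by
  obtain ⟨hcI, hneg, hdom⟩ := h
  refine ⟨hcI, ?_, fun J hJ hcJ => ?_⟩
  · rwa [term_piecewise_neg, hs.neg_one_pow, one_mul]
  · simpa only [abs_term_piecewise_neg] using hdom J hJ hcJ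

theorem IsDominantNegTerm.odd_sum_of_negSet_subset_pos {I : ι → ℕ} {y : ι → ℝ}
    (h : IsDominantNegTerm c I y) (hpos : negSet c ⊆ {y | ∀ i, 0 < y i}) {s : Finset ι}
    (hs : s.Nonempty) : Odd (∑ i ∈ s, I i) := by
  by_contra hodd
  obtain ⟨i, hi⟩ := hs
  have hy : 0 < y i := hpos ⟨I, h⟩ i
  have hflip : 0 < s.piecewise (-y) y i :=
    hpos ⟨I, h.piecewise_neg (Nat.not_odd_iff_even.mp hodd)⟩ i
  rw [piecewise_eq_of_mem _ _ _ hi, Pi.neg_apply] at hflip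
  linarith

omit [DecidableEq ι] in
theorem negSet_eq_empty_of_subset_pos [Nontrivial ι] (hpos : negSet c ⊆ {y | ∀ i, 0 < y i}) :
    negSet c = ∅ := by
  classical
  obtain ⟨i, j, hij⟩ := exists_pair_ne ι
  refine Set.eq_empty_iff_forall_notMem.mpr fun y ⟨I, h⟩ => ?_
  have hi : Odd (I i) := by
    simpa using h.odd_sum_of_negSet_subset_pos hpos (singleton_nonempty i)
  have hj : Odd (I j) := by
    simpa using h.odd_sum_of_negSet_subset_pos hpos (singleton_nonempty j)
  have hij : Odd (I i + I j) := by
    simpa [sum_pair hij] using h.odd_sum_of_negSet_subset_pos hpos (insert_nonempty i {j})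
  exact Nat.not_even_iff_odd.mpr hij (hi.add_odd hj)

end TropicalPolynomial

theorem stmt_15_general (n : ℕ) (hn : 2 ≤ n) (c : (Fin n → ℕ) → ℝ) :
    let term : (Fin n → ℕ) → (Fin n → ℝ) → ℝ := fun I y => c I * ∏ i, (y i) ^ (I i)
    let Sneg : Set (Fin n → ℝ) :=
      {y | ∃ I : Fin n → ℕ, c I ≠ 0 ∧ term I y < 0 ∧
        ∀ J : Fin n → ℕ, J ≠ I → c J ≠ 0 → |term J y| < |term I y|}
    Sneg ⊆ {y | ∀ i, 0 < y i} → Sneg = ∅ := by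
  have : Nontrivial (Fin n) := Fin.nontrivial_iff_two_le.mpr hn
  exact TropicalPolynomial.negSet_eq_empty_of_subset_pos

/-- For `n ≥ 2`, if the set `{F < 0}` of points where a real tropical polynomial `F`
evaluates to a single negative number (unique term of maximal absolute value, negative)
is contained in the strictly positive orthant, then it is empty. -/
theorem stmt_15 (n : ℕ) (hn : 2 ≤ n) (c : (Fin n → ℕ) → ℝ)
    (hfin : {I : Fin n → ℕ | c I ≠ 0}.Finite) :
    let term : (Fin n → ℕ) → (Fin n → ℝ) → ℝ := fun I y => c I * ∏ i, (y i) ^ (I i)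
    let Sneg : Set (Fin n → ℝ) :=
      {y | ∃ I : Fin n → ℕ, c I ≠ 0 ∧ term I y < 0 ∧
        ∀ J : Fin n → ℕ, J ≠ I → c J ≠ 0 → |term J y| < |term I y|}
    Sneg ⊆ {y | ∀ i, 0 < y i} → Sneg = ∅ :=
  stmt_15_general n hn c
end

section
/- Let K be a real closed field with a nontrivial compatible non-archimedean absolute value, and let S = ⋂_{i=1}^m { x ∈ Kⁿ : f_i(x) ≤ 0 } for polynomials f_i ∈ K[x_1,…,x_n]. Then the set ( ⋂_i { y ∈ ℝⁿ : trop_r(f_i)(y) ≤ 0 } ) \ ( ⋂_i { y ∈ ℝⁿ : trop_r(f_i)(y) < 0 } ) is contained in ⋃_i { y ∈ ℝⁿ : 0 ∈ trop_r(f_i)(y) }, and each set { y : 0 ∈ trop_r(f_i)(y) } has empty interior in ℝⁿ (it is contained in the zero set of a finite union of real-algebraic conditions where two monomial terms have equal absolute values). -/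
/-- The signed value `τ(x) = sgn(x)·|x|`. -/
noncomputable def tau {K : Type*} [Field K] [LinearOrder K] [IsStrictOrderedRing K] (v : K → ℝ) (x : K) : ℝ :=
  sgnR x * v x

/-- The term of `trop_r(f)` with exponent `I`, evaluated at `y ∈ ℝⁿ`. -/
noncomputable def tterm {K : Type*} [Field K] [LinearOrder K] [IsStrictOrderedRing K] (v : K → ℝ) {n : ℕ}
    (f : MvPolynomial (Fin n) K) (I : Fin n →₀ ℕ) (y : Fin n → ℝ) : ℝ :=
  tau v (MvPolynomial.coeff I f) * ∏ j, (y j) ^ (I j)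

/-- The maximal absolute value of the terms of `trop_r(f)` at `y`. -/
noncomputable def maxAbs {K : Type*} [Field K] [LinearOrder K] [IsStrictOrderedRing K] (v : K → ℝ) {n : ℕ}
    (f : MvPolynomial (Fin n) K) (y : Fin n → ℝ) : ℝ :=
  sSup ((fun I => |tterm v f I y|) '' (f.support : Set (Fin n →₀ ℕ)))

open Classical in
/-- The value set `trop_r(f)(y) ⊆ ℝ`: the unique term of maximal absolute value if
there is one (and it is nonzero), and the interval `[-M, M]` otherwise. -/
noncomputable def tropval {K : Type*} [Field K] [LinearOrder K] [IsStrictOrderedRing K] (v : K → ℝ) {n : ℕ}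
    (f : MvPolynomial (Fin n) K) (y : Fin n → ℝ) : Set ℝ :=
  if ∃ I ∈ f.support, 0 < |tterm v f I y| ∧
      ∀ J ∈ f.support, J ≠ I → |tterm v f J y| < |tterm v f I y| then
    {t | ∃ I ∈ f.support,
      (∀ J ∈ f.support, J ≠ I → |tterm v f J y| < |tterm v f I y|) ∧ t = tterm v f I y}
  else Set.Icc (-(maxAbs v f y)) (maxAbs v f y)

/-!
If `trop_r(f)(y)` is not a single nonzero term, it is an interval `[-M, M]` with `M ≥ 0`, so it
contains `0`; this gives the inclusion. Conversely, `0 ∈ trop_r(f)(y)` forces a term of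
`trop_r(f)` to vanish at `y` or two distinct terms to have equal absolute value there. Squaring
turns both conditions into polynomial equations, so `y` is a zero of the nonzero real polynomial
`∏_I τ(a_I)² x^{2I} · ∏_{I ≠ J} (τ(a_I)² x^{2I} - τ(a_J)² x^{2J})`, and the zero set of a
nonzero polynomial has empty interior by the identity theorem for analytic functions.
-/

open MvPolynomial

theorem MvPolynomial.interior_setOf_eval_eq_zero {𝕜 σ : Type*} [RCLike 𝕜] [Fintype σ]
    {p : MvPolynomial σ 𝕜} (hp : p ≠ 0) :
    interior {x : σ → 𝕜 | eval x p = 0} = ∅ := by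
  refine Set.eq_empty_of_forall_notMem fun x₀ hx₀ => hp (funext fun x => ?_)
  have hev : (eval · p) =ᶠ[nhds x₀] 0 :=
    Filter.mem_of_superset (isOpen_interior.mem_nhds hx₀) interior_subset
  simpa using (AnalyticOnNhd.eval_mvPolynomial p).eqOn_zero_of_preconnected_of_eventuallyEq_zero
    isPreconnected_univ (Set.mem_univ x₀) hev (Set.mem_univ x)

section Tropical

variable {K : Type*} [Field K] [LinearOrder K] [IsStrictOrderedRing K] {v : K → ℝ} {n : ℕ}
  {f : MvPolynomial (Fin n) K} {y : Fin n → ℝ}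

def IsDominantTerm (v : K → ℝ) (f : MvPolynomial (Fin n) K) (y : Fin n → ℝ) (I : Fin n →₀ ℕ) :
    Prop :=
  I ∈ f.support ∧ 0 < |tterm v f I y| ∧
    ∀ J ∈ f.support, J ≠ I → |tterm v f J y| < |tterm v f I y|

lemma sgnR_ne_zero {c : K} (hc : c ≠ 0) : sgnR c ≠ 0 := by
  unfold sgnR
  rcases hc.lt_or_gt with h | h <;> simp [h, h.not_gt]

lemma tau_ne_zero (hzero : ∀ a, v a = 0 → a = 0) {c : K} (hc : c ≠ 0) : tau v c ≠ 0 :=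
  mul_ne_zero (sgnR_ne_zero hc) (mt (hzero c) hc)

lemma tropval_eq_singleton {I : Fin n →₀ ℕ} (h : IsDominantTerm v f y I) :
    tropval v f y = {tterm v f I y} := by
  obtain ⟨hI, hpos, hdom⟩ := h
  rw [tropval, if_pos ⟨I, hI, hpos, hdom⟩]
  ext t
  simp only [Set.mem_ofPred_eq, Set.mem_singleton_iff]
  constructor
  · rintro ⟨J, hJ, hdomJ, rfl⟩
    obtain rfl | hne := eq_or_ne J I
    · rfl
    · exact (lt_asymm (hdom J hJ hne) (hdomJ I hI hne.symm)).elim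
  · rintro rfl
    exact ⟨I, hI, hdom, rfl⟩

lemma tropval_eq_Icc (h : ¬∃ I, IsDominantTerm v f y I) :
    tropval v f y = Set.Icc (-maxAbs v f y) (maxAbs v f y) :=
  if_neg h

lemma maxAbs_nonneg : 0 ≤ maxAbs v f y :=
  Real.sSup_nonneg <| by
    rintro _ ⟨I, -, rfl⟩
    exact abs_nonneg _

lemma zero_mem_tropval_of_nonpos (hle : ∃ t ∈ tropval v f y, t ≤ 0)
    (hneg : ¬∃ t, tropval v f y = {t} ∧ t < 0) : (0 : ℝ) ∈ tropval v f y := by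
  by_cases hdom : ∃ I, IsDominantTerm v f y I
  · obtain ⟨I, hI⟩ := hdom
    rw [tropval_eq_singleton hI] at hle hneg ⊢
    obtain ⟨t, rfl, ht⟩ := hle
    exact (hneg ⟨_, rfl, ht.lt_of_ne (abs_pos.mp hI.2.1)⟩).elim
  · rw [tropval_eq_Icc hdom]
    exact ⟨neg_nonpos.mpr maxAbs_nonneg, maxAbs_nonneg⟩

lemma exists_tterm_eq_zero_or_abs_eq_of_zero_mem_tropval (hf : f ≠ 0)
    (h0 : (0 : ℝ) ∈ tropval v f y) :
    (∃ I ∈ f.support, tterm v f I y = 0) ∨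
      ∃ I ∈ f.support, ∃ J ∈ f.support, I ≠ J ∧ |tterm v f I y| = |tterm v f J y| := by
  by_cases hdom : ∃ I, IsDominantTerm v f y I
  · obtain ⟨I, hI⟩ := hdom
    rw [tropval_eq_singleton hI, Set.mem_singleton_iff] at h0
    exact absurd hI.2.1 (by simp [← h0])
  obtain ⟨I, hI, hmax⟩ := f.support.exists_max_image (fun I => |tterm v f I y|)
    (support_nonempty.mpr hf)
  rcases (abs_nonneg (tterm v f I y)).eq_or_lt with hzero | hpos
  · exact Or.inl ⟨I, hI, abs_eq_zero.mp hzero.symm⟩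
  · have hnd := not_exists.mp hdom I
    simp only [IsDominantTerm, hI, hpos, true_and, not_forall, not_lt] at hnd
    obtain ⟨J, hJ, hne, hle⟩ := hnd
    exact Or.inr ⟨I, hI, J, hJ, hne.symm, le_antisymm hle (hmax J hJ)⟩

variable (v f)

noncomputable def ttermSq (I : Fin n →₀ ℕ) : MvPolynomial (Fin n) ℝ :=
  monomial (2 • I) (tau v (coeff I f) ^ 2)

noncomputable def tropCollisionPoly : MvPolynomial (Fin n) ℝ :=
  (∏ I ∈ f.support, ttermSq v f I) *
    ∏ p ∈ f.support.offDiag, (ttermSq v f p.1 - ttermSq v f p.2)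

lemma eval_ttermSq (I : Fin n →₀ ℕ) (y : Fin n → ℝ) :
    eval y (ttermSq v f I) = tterm v f I y ^ 2 := by
  simp [ttermSq, tterm, eval_monomial, Finsupp.prod_pow, mul_pow, ← Finset.prod_pow, pow_mul']

lemma tropCollisionPoly_ne_zero (hzero : ∀ a, v a = 0 → a = 0) :
    tropCollisionPoly v f ≠ 0 := by
  have hcoeff : ∀ I ∈ f.support, tau v (coeff I f) ^ 2 ≠ 0 := fun I hI =>
    pow_ne_zero 2 (tau_ne_zero hzero (mem_support_iff.mp hI))
  refine mul_ne_zero (Finset.prod_ne_zero_iff.mpr fun I hI => ?_)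
    (Finset.prod_ne_zero_iff.mpr fun p hp => ?_)
  · exact (monomial_eq_zero).not.mpr (hcoeff I hI)
  · obtain ⟨h1, h2, hne⟩ := Finset.mem_offDiag.mp hp
    rw [sub_ne_zero, ttermSq, ttermSq, Ne, monomial_eq_monomial_iff]
    rintro (⟨hmon, -⟩ | ⟨hz, -⟩)
    · exact hne (smul_right_injective _ two_ne_zero hmon)
    · exact hcoeff _ h1 hz

lemma eval_tropCollisionPoly_eq_zero (hf : f ≠ 0) (h0 : (0 : ℝ) ∈ tropval v f y) :
    eval y (tropCollisionPoly v f) = 0 := by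
  simp only [tropCollisionPoly, map_mul, map_prod, map_sub, eval_ttermSq]
  rcases exists_tterm_eq_zero_or_abs_eq_of_zero_mem_tropval hf h0 with
    ⟨I, hI, hzero⟩ | ⟨I, hI, J, hJ, hne, habs⟩
  · exact mul_eq_zero_of_left (Finset.prod_eq_zero hI (by simp [hzero])) _
  · refine mul_eq_zero_of_right _ (Finset.prod_eq_zero (i := (I, J))
      (Finset.mem_offDiag.mpr ⟨hI, hJ, hne⟩) ?_)
    rw [sub_eq_zero, sq_eq_sq_iff_abs_eq_abs]
    exact habs

lemma interior_setOf_zero_mem_tropval (hzero : ∀ a, v a = 0 → a = 0) (hf : f ≠ 0) :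
    interior {y : Fin n → ℝ | (0 : ℝ) ∈ tropval v f y} = ∅ :=
  Set.subset_empty_iff.mp <| (interior_mono fun _ => eval_tropCollisionPoly_eq_zero v f hf).trans
    (interior_setOf_eval_eq_zero (tropCollisionPoly_ne_zero v f hzero)).le

end Tropical

theorem stmt_16_general {K : Type*} [Field K] [LinearOrder K] [IsStrictOrderedRing K]
    (v : K → ℝ)
    (hzero : ∀ a, v a = 0 ↔ a = 0)
    {n m : ℕ} (f : Fin m → MvPolynomial (Fin n) K) (hf : ∀ i, f i ≠ 0) :
    ({y : Fin n → ℝ | ∀ i, ∃ t ∈ tropval v (f i) y, t ≤ 0} \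
        {y : Fin n → ℝ | ∀ i, ∃ t : ℝ, tropval v (f i) y = {t} ∧ t < 0}
      ⊆ ⋃ i, {y : Fin n → ℝ | (0 : ℝ) ∈ tropval v (f i) y}) ∧
    ∀ i, interior {y : Fin n → ℝ | (0 : ℝ) ∈ tropval v (f i) y} = ∅ := by
  refine ⟨fun y ⟨hle, hneg⟩ => ?_, fun i =>
    interior_setOf_zero_mem_tropval v (f i) (fun a => (hzero a).mp) (hf i)⟩
  obtain ⟨i, hi⟩ := not_forall.mp hneg
  exact Set.mem_iUnion.mpr ⟨i, zero_mem_tropval_of_nonpos (hle i) hi⟩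

/-- For `S = ⋂ᵢ {fᵢ ≤ 0}`, the difference `⋂ᵢ{trop_r(fᵢ) ≤ 0} \ ⋂ᵢ{trop_r(fᵢ) < 0}`
is contained in `⋃ᵢ {0 ∈ trop_r(fᵢ)}`, and each set `{y : 0 ∈ trop_r(fᵢ)(y)}` has
empty interior in `ℝⁿ`. -/
theorem stmt_16 {K : Type*} [Field K] [LinearOrder K] [IsStrictOrderedRing K]
    (hsq : ∀ x : K, 0 ≤ x → ∃ y : K, y ^ 2 = x)
    (hodd : ∀ p : Polynomial K, Odd p.natDegree → ∃ x : K, p.eval x = 0)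
    (v : K → ℝ)
    (hnonneg : ∀ a, 0 ≤ v a) (hzero : ∀ a, v a = 0 ↔ a = 0)
    (hmul : ∀ a b, v (a * b) = v a * v b)
    (hna : ∀ a b, v (a + b) ≤ max (v a) (v b))
    (hcomp : ∀ a b : K, 0 ≤ a → a ≤ b → v a ≤ v b)
    (hnt : ∃ a : K, v a ≠ 0 ∧ v a ≠ 1)
    {n m : ℕ} (f : Fin m → MvPolynomial (Fin n) K) (hf : ∀ i, f i ≠ 0) :
    ({y : Fin n → ℝ | ∀ i, ∃ t ∈ tropval v (f i) y, t ≤ 0} \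
        {y : Fin n → ℝ | ∀ i, ∃ t : ℝ, tropval v (f i) y = {t} ∧ t < 0}
      ⊆ ⋃ i, {y : Fin n → ℝ | (0 : ℝ) ∈ tropval v (f i) y}) ∧
    ∀ i, interior {y : Fin n → ℝ | (0 : ℝ) ∈ tropval v (f i) y} = ∅ :=
  stmt_16_general v hzero f hf
end

section
/- Let K be a real closed field with compatible non-archimedean absolute value, S ⊆ K_{>0}ⁿ a semialgebraic set, and F = A₁X^{α₁} ⊕ ⋯ ⊕ A_k X^{α_k} ⊕ B₁X^{β₁} ⊕ ⋯ ⊕ B_ℓ X^{β_ℓ} a real tropical polynomial with A_i > 0 and B_j < 0, all in the signed value set of K, such that for every x ∈ S, the maximum of A_i·|x|^{α_i} over i is at least the maximum of |B_j|·|x|^{β_j} over j (i.e., F ≥ 0 on trop_r(S)). Choose a_i, b_j ∈ K with sgn(a_i)|a_i| = A_i and sgn(b_j)|b_j| = B_j. Then for every x ∈ S, |Σ_i a_i x^{α_i}| ≥ |Σ_j b_j x^{β_j}| > 0 (provided ℓ ≥ 1), and hence the quotient φ(x) = (Σ_i a_i x^{α_i}) / (−Σ_j b_j x^{β_j}) satisfies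 |φ(x)| ≥ 1. -/
/-!
The ultrametric inequality bounds `|Σⱼ bⱼ x^{βⱼ}|` by its largest term `|bⱼ| |x|^{βⱼ}`, which by
hypothesis is at most some `Aᵢ |x|^{αᵢ} = |aᵢ x^{αᵢ}|`. Since `x > 0` and `aᵢ > 0`, all terms of
`Σᵢ aᵢ x^{αᵢ}` are positive, so this sum dominates each of its terms in the order of `K`, hence
in absolute value by compatibility. Positivity of the right-hand side comes from all `bⱼ x^{βⱼ}`
being negative.
-/

open Finset

def absoluteValueOfNonarchimedean {R : Type*} [Semiring R] (v : R → ℝ) (hnonneg : ∀ a, 0 ≤ v a)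
    (hzero : ∀ a, v a = 0 ↔ a = 0) (hmul : ∀ a b, v (a * b) = v a * v b)
    (hna : ∀ a b, v (a + b) ≤ max (v a) (v b)) : AbsoluteValue R ℝ where
  toFun := v
  map_mul' := hmul
  nonneg' := hnonneg
  eq_zero' := hzero
  add_le' a b := (hna a b).trans (max_le_add_of_nonneg (hnonneg a) (hnonneg b))

section SignedValue

variable {K : Type*} [Field K] [LinearOrder K] [IsStrictOrderedRing K] (abv : AbsoluteValue K ℝ)

theorem pos_and_eq_of_sgnR_mul_eq {c : K} {A : ℝ} (hA : 0 < A) (h : sgnR c * abv c = A) :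
    0 < c ∧ abv c = A := by
  rcases lt_trichotomy c 0 with hc | rfl | hc
  · simp only [sgnR, hc.not_gt, hc, if_false, if_true] at h
    linarith [abv.nonneg c]
  · simp only [sgnR, lt_irrefl, if_false, zero_mul] at h
    exact absurd h hA.ne
  · simp only [sgnR, hc, if_true, one_mul] at h
    exact ⟨hc, h⟩

theorem neg_and_eq_abs_of_sgnR_mul_eq {c : K} {B : ℝ} (hB : B < 0) (h : sgnR c * abv c = B) :
    c < 0 ∧ abv c = |B| := by
  rcases lt_trichotomy c 0 with hc | rfl | hc
  · simp only [sgnR, hc.not_gt, hc, if_false, if_true] at h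
    exact ⟨hc, by rw [abs_of_neg hB]; linarith⟩
  · simp only [sgnR, lt_irrefl, if_false, zero_mul] at h
    exact absurd h hB.ne'
  · simp only [sgnR, hc, if_true, one_mul] at h
    linarith [abv.nonneg c]

end SignedValue

theorem abv_mul_prod_pow {R : Type*} [CommSemiring R] [Nontrivial R] (abv : AbsoluteValue R ℝ)
    {n : ℕ} (c : R) (x : Fin n → R) (γ : Fin n → ℕ) :
    abv (c * ∏ l, x l ^ γ l) = abv c * ∏ l, abv (x l) ^ γ l := by
  simp only [map_mul, map_prod, map_pow]

theorem abv_sum_le_abv_sum_of_forall_exists_le {R : Type*} [Semiring R] [PartialOrder R]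
    [IsOrderedAddMonoid R] {abv : AbsoluteValue R ℝ} (hna : IsNonarchimedean abv)
    (hmono : ∀ a b : R, 0 ≤ a → a ≤ b → abv a ≤ abv b) {ι κ : Type*} [Fintype ι] [Fintype κ]
    [Nonempty κ] {p : ι → R} {q : κ → R} (hp : ∀ i, 0 ≤ p i)
    (hpq : ∀ j, ∃ i, abv (q j) ≤ abv (p i)) :
    abv (∑ j, q j) ≤ abv (∑ i, p i) := by
  obtain ⟨j, -, hj⟩ := hna.finset_image_add_of_nonempty q univ_nonempty
  obtain ⟨i, hi⟩ := hpq j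
  calc abv (∑ j, q j) ≤ abv (q j) := hj
    _ ≤ abv (p i) := hi
    _ ≤ abv (∑ i, p i) := hmono _ _ (hp i) (single_le_sum (fun i _ => hp i) (mem_univ i))

theorem stmt_17_general {K : Type*} [Field K] [LinearOrder K] [IsStrictOrderedRing K]
    (v : K → ℝ)
    (hnonneg : ∀ a, 0 ≤ v a) (hzero : ∀ a, v a = 0 ↔ a = 0)
    (hmul : ∀ a b, v (a * b) = v a * v b)
    (hna : ∀ a b, v (a + b) ≤ max (v a) (v b))
    (hcomp : ∀ a b : K, 0 ≤ a → a ≤ b → v a ≤ v b)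
    {n : ℕ} (S : Set (Fin n → K))
    (hSpos : ∀ x ∈ S, ∀ l, 0 < x l)
    (k ℓ : ℕ) (hℓ : 1 ≤ ℓ)
    (α : Fin k → Fin n → ℕ) (β : Fin ℓ → Fin n → ℕ)
    (A : Fin k → ℝ) (B : Fin ℓ → ℝ) (hA : ∀ i, 0 < A i) (hB : ∀ j, B j < 0)
    (a : Fin k → K) (b : Fin ℓ → K)
    (ha : ∀ i, sgnR (a i) * v (a i) = A i) (hb : ∀ j, sgnR (b j) * v (b j) = B j)
    (hFge : ∀ x ∈ S, ∀ j : Fin ℓ, ∃ i : Fin k,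
      |B j| * ∏ l, (v (x l)) ^ (β j l) ≤ A i * ∏ l, (v (x l)) ^ (α i l)) :
    ∀ x ∈ S,
      v (∑ j, b j * ∏ l, (x l) ^ (β j l)) ≤ v (∑ i, a i * ∏ l, (x l) ^ (α i l)) ∧
      0 < v (∑ j, b j * ∏ l, (x l) ^ (β j l)) ∧
      1 ≤ v (∑ i, a i * ∏ l, (x l) ^ (α i l)) / v (∑ j, b j * ∏ l, (x l) ^ (β j l)) := by
  let abv := absoluteValueOfNonarchimedean v hnonneg hzero hmul hna
  have : Nonempty (Fin ℓ) := ⟨⟨0, hℓ⟩⟩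
  have ha_pos i := pos_and_eq_of_sgnR_mul_eq abv (hA i) (ha i)
  have hb_neg j := neg_and_eq_abs_of_sgnR_mul_eq abv (hB j) (hb j)
  intro x hx
  have hmonomial (γ : Fin n → ℕ) : 0 < ∏ l, x l ^ γ l :=
    prod_pos fun l _ => pow_pos (hSpos x hx l) _
  have hQ : 0 < abv (∑ j, b j * ∏ l, x l ^ β j l) :=
    abv.pos (sum_neg (fun j _ => mul_neg_of_neg_of_pos (hb_neg j).1 (hmonomial _))
      univ_nonempty).ne
  have hQP : abv (∑ j, b j * ∏ l, x l ^ β j l) ≤ abv (∑ i, a i * ∏ l, x l ^ α i l) := by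
    refine abv_sum_le_abv_sum_of_forall_exists_le (abv := abv) hna hcomp
      (fun i => (mul_pos (ha_pos i).1 (hmonomial _)).le) fun j => ?_
    obtain ⟨i, hi⟩ := hFge x hx j
    refine ⟨i, ?_⟩
    rwa [abv_mul_prod_pow abv, abv_mul_prod_pow abv, (ha_pos i).2, (hb_neg j).2]
  exact ⟨hQP, hQ, (one_le_div hQ).mpr hQP⟩

/-- Lifting lemma, key estimate: if `F = ⊕ᵢ Aᵢ X^{αᵢ} ⊕ ⊕ⱼ Bⱼ X^{βⱼ}` (with `Aᵢ > 0`,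
`Bⱼ < 0`) satisfies `F ≥ 0` on `trop_r(S)` for `S ⊆ K_{>0}ⁿ` semialgebraic, and
`aᵢ, bⱼ ∈ K` have signed values `Aᵢ, Bⱼ`, then for every `x ∈ S` we have
`|Σᵢ aᵢ x^{αᵢ}| ≥ |Σⱼ bⱼ x^{βⱼ}| > 0` and hence `|φ(x)| ≥ 1`. -/
theorem stmt_17 {K : Type*} [Field K] [LinearOrder K] [IsStrictOrderedRing K]
    (hsq : ∀ x : K, 0 ≤ x → ∃ y : K, y ^ 2 = x)
    (hodd : ∀ p : Polynomial K, Odd p.natDegree → ∃ x : K, p.eval x = 0)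
    (v : K → ℝ)
    (hnonneg : ∀ a, 0 ≤ v a) (hzero : ∀ a, v a = 0 ↔ a = 0)
    (hmul : ∀ a b, v (a * b) = v a * v b)
    (hna : ∀ a b, v (a + b) ≤ max (v a) (v b))
    (hcomp : ∀ a b : K, 0 ≤ a → a ≤ b → v a ≤ v b)
    {n : ℕ} (S : Set (Fin n → K)) (hS : IsSA S)
    (hSpos : ∀ x ∈ S, ∀ l, 0 < x l)
    (k ℓ : ℕ) (hℓ : 1 ≤ ℓ)
    (α : Fin k → Fin n → ℕ) (β : Fin ℓ → Fin n → ℕ)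
    (A : Fin k → ℝ) (B : Fin ℓ → ℝ) (hA : ∀ i, 0 < A i) (hB : ∀ j, B j < 0)
    (a : Fin k → K) (b : Fin ℓ → K)
    (ha : ∀ i, sgnR (a i) * v (a i) = A i) (hb : ∀ j, sgnR (b j) * v (b j) = B j)
    (hFge : ∀ x ∈ S, ∀ j : Fin ℓ, ∃ i : Fin k,
      |B j| * ∏ l, (v (x l)) ^ (β j l) ≤ A i * ∏ l, (v (x l)) ^ (α i l)) :
    ∀ x ∈ S,
      v (∑ j, b j * ∏ l, (x l) ^ (β j l)) ≤ v (∑ i, a i * ∏ l, (x l) ^ (α i l)) ∧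
      0 < v (∑ j, b j * ∏ l, (x l) ^ (β j l)) ∧
      1 ≤ v (∑ i, a i * ∏ l, (x l) ^ (α i l)) / v (∑ j, b j * ∏ l, (x l) ^ (β j l)) :=
  stmt_17_general v hnonneg hzero hmul hna hcomp S hSpos k ℓ hℓ α β A B hA hB a b ha hb hFge
end

section
/- Let A be a commutative ring. Suppose for every finite family F = (f_1,…,f_m) of elements of A we are given a point z_F ∈ ℝ^m, compatibly: whenever τ : {1,…,m} → {1,…,r} satisfies f'_{τ(i)} = f_i for families F = (f_1,…,f_m) and F' = (f'_1,…,f'_r), we have (z_{F'})_{τ(i)} = (z_F)_i; and suppose that for every finite family F there exists a signed seminorm y on A with (|f_i|ˢ_y)_i = z_F. Then the map x : A → ℝ defined by x(f) = (z_{(f)})_1 is well-defined and is itself a signed seminorm on A. -/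
/-- A signed seminorm on a commutative ring. -/
def IsSignedSeminorm {A : Type*} [CommRing A] (s : A → ℝ) : Prop :=
  (∀ f g : A, s (f * g) = s f * s g) ∧
  (∀ f g : A, min (s f) (s g) ≤ s (f + g) ∧ s (f + g) ≤ max (s f) (s g)) ∧
  s 1 = 1 ∧ s (-1) = -1

theorem IsSignedSeminorm.of_forall_fin_exists {A : Type*} [CommRing A] {x : A → ℝ}
    (h : ∀ (m : ℕ) (F : Fin m → A), ∃ s : A → ℝ, IsSignedSeminorm s ∧ ∀ i, s (F i) = x (F i)) :
    IsSignedSeminorm x := by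
  have hagree : ∀ f g : A, ∃ s : A → ℝ, IsSignedSeminorm s ∧
      s f = x f ∧ s g = x g ∧ s (f + g) = x (f + g) ∧ s (f * g) = x (f * g) := by
    intro f g
    obtain ⟨s, hs, hF⟩ := h 4 ![f, g, f + g, f * g]
    exact ⟨s, hs, hF 0, hF 1, hF 2, hF 3⟩
  refine ⟨fun f g => ?_, fun f g => ?_, ?_, ?_⟩
  · obtain ⟨s, hs, hf, hg, -, hfg⟩ := hagree f g
    rw [← hf, ← hg, ← hfg]
    exact hs.1 f g
  · obtain ⟨s, hs, hf, hg, hfg, -⟩ := hagree f g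
    rw [← hf, ← hg, ← hfg]
    exact hs.2.1 f g
  · obtain ⟨s, hs, h1, -⟩ := hagree 1 1
    exact h1 ▸ hs.2.2.1
  · obtain ⟨s, hs, h1, -⟩ := hagree (-1) (-1)
    exact h1 ▸ hs.2.2.2

/-- A compatible family `(z_F)_F` over all finite families `F` of elements of `A`,
each realized by some signed seminorm, defines a signed seminorm
`f ↦ (z_{(f)})₁` on `A`. -/
theorem stmt_18 {A : Type*} [CommRing A]
    (z : (m : ℕ) → (Fin m → A) → (Fin m → ℝ))
    (hcompat : ∀ (m r : ℕ) (F : Fin m → A) (F' : Fin r → A) (τ : Fin m → Fin r),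
      (∀ i, F' (τ i) = F i) → ∀ i, z r F' (τ i) = z m F i)
    (hreal : ∀ (m : ℕ) (F : Fin m → A),
      ∃ s : A → ℝ, IsSignedSeminorm s ∧ ∀ i, s (F i) = z m F i) :
    (∀ (m : ℕ) (F : Fin m → A) (i : Fin m) (f : A), F i = f →
      z m F i = z 1 (fun _ => f) 0) ∧
    IsSignedSeminorm (fun f : A => z 1 (fun _ => f) 0) := by
  have hsingleton : ∀ (m : ℕ) (F : Fin m → A) (i : Fin m) (f : A), F i = f →
      z m F i = z 1 (fun _ => f) 0 :=
    fun m F i f hf => hcompat 1 m (fun _ => f) F (fun _ => i) (fun _ => hf) 0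
  refine ⟨hsingleton, IsSignedSeminorm.of_forall_fin_exists fun m F => ?_⟩
  obtain ⟨s, hs, hsF⟩ := hreal m F
  exact ⟨s, hs, fun i => (hsF i).trans (hsingleton m F i _ rfl)⟩
end

section
/- Let L be a field with a non-archimedean absolute value |·| and let P be an ordering of L compatible with |·|, inducing the residue ordering P̄ on the residue field k_L. Given any ε ∈ {+1, −1} and any element g ∈ L* with |g| ∉ |L*|² (i.e. the class of |g| is nontrivial in |L*|/|L*|²), the set of orderings P' of L compatible with |·| that induce the same residue ordering P̄ on k_L and satisfy sgn_{P'}(g) = ε is nonempty; moreover, if |L*|/|L*|² is generated by the class of |g|, this ordering P' is unique. -/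
/-- An ordering of a field `L`. -/
def IsFieldOrdering {L : Type*} [Field L] (P : Set L) : Prop :=
  (∀ a ∈ P, ∀ b ∈ P, a + b ∈ P) ∧ (∀ a ∈ P, ∀ b ∈ P, a * b ∈ P) ∧
  (∀ a : L, a ∈ P ∨ -a ∈ P) ∧ (∀ a : L, a ∈ P → -a ∈ P → a = 0)

section BKaux

variable {L : Type*} [Field L] (v : L → ℝ)

lemma bk_v_one (hzero : ∀ a : L, v a = 0 ↔ a = 0) (hmul : ∀ a b, v (a * b) = v a * v b) :
    v 1 = 1 := by
  have h := hmul 1 1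
  rw [mul_one] at h
  have h1 : v (1 : L) ≠ 0 := fun h0 => one_ne_zero ((hzero 1).mp h0)
  have h2 : v (1 : L) * 1 = v 1 * v 1 := by linarith
  exact (mul_left_cancel₀ h1 h2).symm

lemma bk_v_neg (hnonneg : ∀ a : L, 0 ≤ v a) (hzero : ∀ a : L, v a = 0 ↔ a = 0)
    (hmul : ∀ a b, v (a * b) = v a * v b) (a : L) : v (-a) = v a := by
  have hm1 : v (-1 : L) = 1 := by
    have h := hmul (-1) (-1)
    rw [neg_mul_neg, one_mul, bk_v_one v hzero hmul] at h
    rcases mul_self_eq_one_iff.mp h.symm with h' | h'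
    · exact h'
    · linarith [hnonneg (-1 : L)]
  calc v (-a) = v ((-1) * a) := by ring_nf
    _ = v a := by rw [hmul, hm1, one_mul]

lemma bk_v_inv (hzero : ∀ a : L, v a = 0 ↔ a = 0) (hmul : ∀ a b, v (a * b) = v a * v b)
    {a : L} (ha : a ≠ 0) : v a⁻¹ = (v a)⁻¹ := by
  have h := hmul a a⁻¹
  rw [mul_inv_cancel₀ ha, bk_v_one v hzero hmul] at h
  exact eq_inv_of_mul_eq_one_right h.symm

/-- ultrametric: strict inequality forces equality with the max -/
lemma bk_v_add_eq (hnonneg : ∀ a : L, 0 ≤ v a) (hzero : ∀ a : L, v a = 0 ↔ a = 0)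
    (hmul : ∀ a b, v (a * b) = v a * v b) (hna : ∀ a b : L, v (a + b) ≤ max (v a) (v b))
    {a b : L} (h : v a < v b) : v (a + b) = v b := by
  have h1 : v (a + b) ≤ v b := le_trans (hna a b) (by simp [le_of_lt h])
  have h2 : v b ≤ max (v (a + b)) (v a) := by
    have e : a + b + -a = b := by ring
    have := hna (a + b) (-a)
    rw [e, bk_v_neg v hnonneg hzero hmul] at this
    exact this
  rcases max_cases (v (a+b)) (v a) with ⟨he, _⟩ | ⟨he, _⟩ <;> rw [he] at h2
  · linarith
  · linarith

end BKaux

section BKord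
variable {L : Type*} [Field L] {Q : Set L} (hQ : IsFieldOrdering Q)
include hQ

lemma bk_zero_mem : (0 : L) ∈ Q := by
  rcases hQ.2.2.1 0 with h | h
  · exact h
  · rwa [neg_zero] at h

lemma bk_neg_mem_iff {a : L} (ha : a ≠ 0) : -a ∈ Q ↔ a ∉ Q := by
  constructor
  · intro h ha'
    exact ha (hQ.2.2.2 a ha' h)
  · intro h
    rcases hQ.2.2.1 a with h' | h'
    · exact absurd h' h
    · exact h'

lemma bk_mul_mem_iff {a b : L} (ha : a ≠ 0) (hb : b ≠ 0) :
    a * b ∈ Q ↔ (a ∈ Q ↔ b ∈ Q) := by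
  have hab : a * b ≠ 0 := mul_ne_zero ha hb
  by_cases h1 : a ∈ Q <;> by_cases h2 : b ∈ Q
  · exact iff_of_true (hQ.2.1 a h1 b h2) (by tauto)
  · have hnb : -b ∈ Q := (bk_neg_mem_iff hQ hb).mpr h2
    have : a * (-b) ∈ Q := hQ.2.1 a h1 _ hnb
    have hnab : -(a*b) ∈ Q := by rwa [mul_neg] at this
    have : a * b ∉ Q := ((bk_neg_mem_iff hQ hab).mp hnab)
    tauto
  · have hna : -a ∈ Q := (bk_neg_mem_iff hQ ha).mpr h1
    have : (-a) * b ∈ Q := hQ.2.1 _ hna b h2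
    have hnab : -(a*b) ∈ Q := by rwa [neg_mul] at this
    have : a * b ∉ Q := ((bk_neg_mem_iff hQ hab).mp hnab)
    tauto
  · have hna : -a ∈ Q := (bk_neg_mem_iff hQ ha).mpr h1
    have hnb : -b ∈ Q := (bk_neg_mem_iff hQ hb).mpr h2
    have : (-a) * (-b) ∈ Q := hQ.2.1 _ hna _ hnb
    rw [neg_mul_neg] at this
    tauto

lemma bk_sq_mem (a : L) : a * a ∈ Q := by
  rcases hQ.2.2.1 a with h | h
  · exact hQ.2.1 a h a h
  · have := hQ.2.1 _ h _ h
    rwa [neg_mul_neg] at this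

lemma bk_le_add (v : L → ℝ)
    (hcomp : ∀ a b : L, a ∈ Q → b ∈ Q → b - a ∈ Q → v a ≤ v b)
    {a b : L} (ha : a ∈ Q) (hb : b ∈ Q) : v a ≤ v (a + b) := by
  refine hcomp a (a + b) ha (hQ.1 a ha b hb) ?_
  have e : a + b - a = b := by ring
  rw [e]; exact hb

lemma bk_add_lt (v : L → ℝ) (hnonneg : ∀ a : L, 0 ≤ v a)
    (hzero : ∀ a : L, v a = 0 ↔ a = 0) (hmul : ∀ a b, v (a * b) = v a * v b)
    (hna : ∀ a b : L, v (a + b) ≤ max (v a) (v b))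
    (hcomp : ∀ a b : L, a ∈ Q → b ∈ Q → b - a ∈ Q → v a ≤ v b)
    {a b : L} (h : v a < v b) : (a + b ∈ Q ↔ b ∈ Q) ∧ v (a + b) = v b := by
  have hveq : v (a + b) = v b := bk_v_add_eq v hnonneg hzero hmul hna h
  have hb0 : b ≠ 0 := by
    intro hb
    rw [hb, (hzero 0).mpr rfl] at h
    linarith [hnonneg a]
  have hs0 : a + b ≠ 0 := by
    intro h0
    rw [h0, (hzero 0).mpr rfl] at hveq
    exact hb0 ((hzero b).mp hveq.symm)
  have dir : ∀ x y : L, v x < v y → y ∈ Q → x + y ∈ Q := by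
    intro x y hxy hyQ
    by_contra hn
    have hveq' : v (x + y) = v y := bk_v_add_eq v hnonneg hzero hmul hna hxy
    have hy0 : y ≠ 0 := by
      intro hy
      rw [hy, (hzero 0).mpr rfl] at hxy
      linarith [hnonneg x]
    have hxy0 : x + y ≠ 0 := by
      intro h0
      rw [h0, (hzero 0).mpr rfl] at hveq'
      exact hy0 ((hzero y).mp hveq'.symm)
    have hnxy : -(x + y) ∈ Q := (bk_neg_mem_iff hQ hxy0).mpr hn
    have hx := bk_le_add hQ v hcomp hyQ hnxy
    have e : y + -(x + y) = -x := by ring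
    rw [e, bk_v_neg v hnonneg hzero hmul] at hx
    linarith
  refine ⟨⟨?_, dir a b h⟩, hveq⟩
  intro hs
  by_contra hbn
  have hnb : -b ∈ Q := (bk_neg_mem_iff hQ hb0).mpr hbn
  have : (-a) + (-b) ∈ Q := by
    refine dir (-a) (-b) ?_ hnb
    rw [bk_v_neg v hnonneg hzero hmul, bk_v_neg v hnonneg hzero hmul]
    exact h
  have hns : -(a + b) ∈ Q := by rwa [← neg_add] at this
  exact ((bk_neg_mem_iff hQ hs0).mp hns) hs

lemma bk_add_eq (v : L → ℝ)
    (hna : ∀ a b : L, v (a + b) ≤ max (v a) (v b))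
    (hcomp : ∀ a b : L, a ∈ Q → b ∈ Q → b - a ∈ Q → v a ≤ v b)
    {a b : L} (ha : a ∈ Q) (hb : b ∈ Q) (h : v a = v b) :
    a + b ∈ Q ∧ v (a + b) = v a := by
  refine ⟨hQ.1 a ha b hb, ?_⟩
  have h1 := bk_le_add hQ v hcomp ha hb
  have h2 := hna a b
  rw [← h] at h2
  simp only [max_self] at h2
  linarith

end BKord

lemma bk_char {L : Type*} [Field L] (v : L → ℝ)
    (hnonneg : ∀ a, 0 ≤ v a) (hzero : ∀ a : L, v a = 0 ↔ a = 0)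
    (hmul : ∀ a b, v (a * b) = v a * v b)
    (g : L) (hg0 : g ≠ 0) (hg : ¬ ∃ h : L, h ≠ 0 ∧ v g = v h * v h) (ω : ZMod 2) :
    ∃ c : L → ZMod 2,
      (∀ a b : L, a ≠ 0 → b ≠ 0 → c (a * b) = c a + c b) ∧
      (∀ a : L, a ≠ 0 → v a = 1 → c a = 0) ∧
      c g = ω := by
  classical
  have hz2 : ∀ x : ZMod 2, x ≠ 0 → x = 1 := by decide
  have hv1 : v (1 : L) = 1 := bk_v_one v hzero hmul
  have hω : ω = 0 ∨ ω = 1 := by revert ω; decide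
  have hvinv : ∀ a : L, a ≠ 0 → v a⁻¹ = (v a)⁻¹ := fun a ha => bk_v_inv v hzero hmul ha
  rcases hω with rfl | rfl
  · exact ⟨fun _ => 0, by simp, by simp, rfl⟩
  · set N : Subgroup Lˣ :=
      { carrier := {u : Lˣ | ∃ w : Lˣ, v (u : L) = v (w : L) * v (w : L)}
        one_mem' := ⟨1, by rw [Units.val_one, hv1]; norm_num⟩
        mul_mem' := by
          rintro x y ⟨wx, hx⟩ ⟨wy, hy⟩
          refine ⟨wx * wy, ?_⟩
          rw [Units.val_mul, Units.val_mul, hmul, hmul, hx, hy]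
          ring
        inv_mem' := by
          rintro x ⟨w, hw⟩
          refine ⟨w⁻¹, ?_⟩
          rw [Units.val_inv_eq_inv_val, Units.val_inv_eq_inv_val,
            hvinv _ x.ne_zero, hvinv _ w.ne_zero, hw, mul_inv] } with hNdef
    have hsq : ∀ q : Lˣ ⧸ N, q * q = 1 := by
      intro q
      induction q using QuotientGroup.induction_on with
      | H u =>
        rw [← QuotientGroup.mk_mul, QuotientGroup.eq_one_iff]
        exact ⟨u, by rw [Units.val_mul, hmul]⟩
    haveI := AddCommGroup.zmodModule (G := Additive (Lˣ ⧸ N)) (n := 2) (by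
      intro x
      rw [two_nsmul]
      exact congrArg Additive.ofMul (hsq (Additive.toMul x)))
    haveI : Fact (Nat.Prime 2) := ⟨by norm_num⟩
    set gU : Lˣ := Units.mk0 g hg0 with hgU
    have hgN : gU ∉ N := by
      rintro ⟨w, hw⟩
      exact hg ⟨(w : L), w.ne_zero, by rwa [hgU, Units.val_mk0] at hw⟩
    have hx : (Additive.ofMul ((gU : Lˣ ⧸ N))) ≠ 0 := by
      intro h0
      have h1 : ((gU : Lˣ ⧸ N)) = 1 := h0
      exact hgN ((QuotientGroup.eq_one_iff gU).mp h1)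
    have hex : ∃ φ : Module.Dual (ZMod 2) (Additive (Lˣ ⧸ N)),
        φ (Additive.ofMul ((gU : Lˣ ⧸ N))) ≠ 0 := by
      have := mt (Module.forall_dual_apply_eq_zero_iff (ZMod 2)
        (Additive.ofMul ((gU : Lˣ ⧸ N)))).mp hx
      push_neg at this
      exact this
    obtain ⟨φ, hφ⟩ := hex
    have hφ1 : φ (Additive.ofMul ((gU : Lˣ ⧸ N))) = 1 := hz2 _ hφ
    refine ⟨fun a => if ha : a = 0 then 0 else
      φ (Additive.ofMul ((Units.mk0 a ha : Lˣ) : Lˣ ⧸ N)), ?_, ?_, ?_⟩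
    · intro a b ha hb
      dsimp only
      rw [dif_neg (mul_ne_zero ha hb), dif_neg ha, dif_neg hb]
      have hu : Units.mk0 (a * b) (mul_ne_zero ha hb) = Units.mk0 a ha * Units.mk0 b hb :=
        Units.ext (by simp)
      rw [hu, QuotientGroup.mk_mul, ofMul_mul, map_add]
    · intro a ha hva
      dsimp only
      rw [dif_neg ha]
      have h1 : ((Units.mk0 a ha : Lˣ) : Lˣ ⧸ N) = 1 := by
        rw [QuotientGroup.eq_one_iff]
        exact ⟨1, by rw [Units.val_mk0, Units.val_one, hv1, hva]; norm_num⟩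
      rw [h1, ofMul_one, map_zero]
    · dsimp only
      rw [dif_neg hg0]
      exact hφ1

set_option maxHeartbeats 1000000

/-- Baer–Krull theorem, rank-one case: let `L` be a field with non-archimedean
absolute value `v`, `P` a compatible ordering with residue ordering `P̄` on
`k = O ⧸ m`, and `g ∈ L*` with `|g| ∉ |L*|²`.  For each sign `ε ∈ {±1}` there is a
compatible ordering `P'` of `L` inducing `P̄` with `sgn_{P'}(g) = ε`, and if the class
of `|g|` generates `|L*|/|L*|²`, this `P'` is unique. -/
theorem stmt_19 {L : Type*} [Field L] (v : L → ℝ)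
    (hnonneg : ∀ a, 0 ≤ v a) (hzero : ∀ a, v a = 0 ↔ a = 0)
    (hmul : ∀ a b, v (a * b) = v a * v b)
    (hna : ∀ a b, v (a + b) ≤ max (v a) (v b))
    (P : Set L) (hP : IsFieldOrdering P)
    (hPcomp : ∀ a b : L, a ∈ P → b ∈ P → b - a ∈ P → v a ≤ v b)
    (O : Subring L) (hO : ∀ a : L, a ∈ O ↔ v a ≤ 1)
    (m : Ideal O) (hm : ∀ a : O, a ∈ m ↔ v (a : L) < 1)
    (g : L) (hg0 : g ≠ 0) (hg : ¬ ∃ h : L, h ≠ 0 ∧ v g = v h * v h)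
    (ε : ℤ) (hε : ε = 1 ∨ ε = -1) :
    let Res : Set L → Set (O ⧸ m) :=
      fun Q => {x | ∃ a : O, (a : L) ∈ Q ∧ Ideal.Quotient.mk m a = x}
    let SgnCond : Set L → Prop := fun Q => (ε = 1 → -g ∉ Q) ∧ (ε = -1 → g ∉ Q)
    let Compat : Set L → Prop := fun Q => ∀ a b : L, a ∈ Q → b ∈ Q → b - a ∈ Q → v a ≤ v b
    (∃ P' : Set L, IsFieldOrdering P' ∧ Compat P' ∧ Res P' = Res P ∧ SgnCond P') ∧
    ((∀ h : L, h ≠ 0 → ∃ u : L, u ≠ 0 ∧ (v h = v u * v u ∨ v h = v g * (v u * v u))) →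
      ∀ P₁ P₂ : Set L,
        (IsFieldOrdering P₁ ∧ Compat P₁ ∧ Res P₁ = Res P ∧ SgnCond P₁) →
        (IsFieldOrdering P₂ ∧ Compat P₂ ∧ Res P₂ = Res P ∧ SgnCond P₂) → P₁ = P₂) := by
  intro Res SgnCond Compat
  classical
  have hv1 : v (1:L) = 1 := bk_v_one v hzero hmul
  have hvz : v (0:L) = 0 := (hzero 0).mpr rfl
  have hvneg : ∀ a : L, v (-a) = v a := bk_v_neg v hnonneg hzero hmul
  have hvne : ∀ a : L, a ≠ 0 → v a ≠ 0 := fun a ha h => ha ((hzero a).mp h)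
  have hzmod : ∀ x y : ZMod 2, (x + y = 0 ↔ (x = 0 ↔ y = 0)) := by decide
  -- choose the character
  set T : Prop := (ε = 1 → g ∈ P) ∧ (ε = -1 → g ∉ P) with hTdef
  obtain ⟨c, hcmul, hcone, hcg⟩ :=
    bk_char v hnonneg hzero hmul g hg0 hg (if T then 0 else 1)
  have hcgT : (c g = 0) ↔ T := by
    by_cases hT : T
    · rw [if_pos hT] at hcg
      exact iff_of_true hcg hT
    · rw [if_neg hT] at hcg
      refine iff_of_false ?_ hT
      rw [hcg]
      decide
  have hceqv : ∀ a b : L, a ≠ 0 → b ≠ 0 → v a = v b → c a = c b := by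
    intro a b ha hb hv
    have hq0 : a * b⁻¹ ≠ 0 := mul_ne_zero ha (inv_ne_zero hb)
    have h1 : c (a * b⁻¹) = 0 := by
      refine hcone _ hq0 ?_
      rw [hmul, bk_v_inv v hzero hmul hb, hv, mul_inv_cancel₀ (hvne b hb)]
    have hba : b * (a * b⁻¹) = a := by field_simp
    calc c a = c (b * (a * b⁻¹)) := by rw [hba]
      _ = c b + c (a * b⁻¹) := hcmul _ _ hb hq0
      _ = c b := by rw [h1, add_zero]
  have hcneg : ∀ a : L, a ≠ 0 → c (-a) = c a := by
    intro a ha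
    exact hceqv _ _ (neg_ne_zero.mpr ha) ha (hvneg a)
  -- the twisted ordering
  set P' : Set L := {a : L | a ≠ 0 → (a ∈ P ∧ c a = 0 ∨ a ∉ P ∧ c a ≠ 0)} with hP'def
  have hmem : ∀ a : L, a ≠ 0 → (a ∈ P' ↔ (a ∈ P ↔ c a = 0)) := by
    intro a ha
    constructor
    · intro h
      rcases h ha with ⟨h1, h2⟩ | ⟨h1, h2⟩
      · exact iff_of_true h1 h2
      · exact iff_of_false h1 h2
    · intro h _
      by_cases hp : a ∈ P
      · exact Or.inl ⟨hp, h.mp hp⟩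
      · exact Or.inr ⟨hp, fun h0 => hp (h.mpr h0)⟩
  have h0mem : (0:L) ∈ P' := fun h => absurd rfl h
  -- P' is an ordering
  have hP'ord : IsFieldOrdering P' := by
    have key : ∀ x y : L, x ≠ 0 → y ≠ 0 → v x < v y → y ∈ P' → x + y ∈ P' := by
      intro x y hx0 hy0 hlt hyP'
      obtain ⟨hsgn, hveq⟩ := bk_add_lt hP v hnonneg hzero hmul hna hPcomp hlt
      have hs0 : x + y ≠ 0 := by
        intro h0
        rw [h0, hvz] at hveq
        exact hvne y hy0 hveq.symm
      rw [hmem _ hs0, hsgn, hceqv _ _ hs0 hy0 hveq]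
      exact (hmem y hy0).mp hyP'
    refine ⟨?_, ?_, ?_, ?_⟩
    · intro a haP' b hbP'
      by_cases ha0 : a = 0
      · rw [ha0, zero_add]; exact hbP'
      by_cases hb0 : b = 0
      · rw [hb0, add_zero]; exact haP'
      by_cases hs0 : a + b = 0
      · intro h; exact absurd hs0 h
      rcases lt_trichotomy (v a) (v b) with hlt | heq | hgt
      · exact key a b ha0 hb0 hlt hbP'
      · have hcab : c a = c b := hceqv _ _ ha0 hb0 heq
        have hPa := (hmem a ha0).mp haP'
        have hPb := (hmem b hb0).mp hbP'
        rw [hmem _ hs0]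
        by_cases hPa' : a ∈ P
        · have hca : c a = 0 := hPa.mp hPa'
          have hPb' : b ∈ P := hPb.mpr (hcab ▸ hca)
          obtain ⟨hsP, hveq⟩ := bk_add_eq hP v hna hPcomp hPa' hPb' heq
          rw [hceqv _ _ hs0 ha0 hveq]
          exact iff_of_true hsP hca
        · have hca : c a ≠ 0 := fun h => hPa' (hPa.mpr h)
          have hna' : -a ∈ P := (bk_neg_mem_iff hP ha0).mpr hPa'
          have hPb' : b ∉ P := fun h => hca (hcab ▸ hPb.mp h)
          have hnb' : -b ∈ P := (bk_neg_mem_iff hP hb0).mpr hPb'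
          obtain ⟨hsP, hveq⟩ := bk_add_eq hP v hna hPcomp hna' hnb'
            (by rw [hvneg, hvneg]; exact heq)
          have hsP2 : -(a + b) ∈ P := by rwa [neg_add]
          have hsP' : a + b ∉ P := (bk_neg_mem_iff hP hs0).mp hsP2
          have hveq' : v (a + b) = v a := by
            have e1 : v (-(a+b)) = v (-a) := by rw [neg_add]; exact hveq
            rw [hvneg, hvneg] at e1
            exact e1
          rw [hceqv _ _ hs0 ha0 hveq']
          exact iff_of_false hsP' hca
      · have := key b a hb0 ha0 hgt haP'
        rwa [add_comm] at this
    · intro a haP' b hbP'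
      by_cases ha0 : a = 0
      · rw [ha0, zero_mul]; exact h0mem
      by_cases hb0 : b = 0
      · rw [hb0, mul_zero]; exact h0mem
      have hab0 : a * b ≠ 0 := mul_ne_zero ha0 hb0
      rw [hmem _ hab0, bk_mul_mem_iff hP ha0 hb0, hcmul a b ha0 hb0,
        hzmod (c a) (c b)]
      have h1 := (hmem a ha0).mp haP'
      have h2 := (hmem b hb0).mp hbP'
      rw [h1, h2]
    · intro a
      by_cases ha0 : a = 0
      · left; rw [ha0]; exact h0mem
      by_cases hk : (a ∈ P ↔ c a = 0)
      · left; exact (hmem a ha0).mpr hk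
      · right
        refine (hmem (-a) (neg_ne_zero.mpr ha0)).mpr ?_
        rw [hcneg a ha0, bk_neg_mem_iff hP ha0]
        constructor
        · intro hnp
          by_contra hc
          exact hk ⟨fun hp => absurd hp hnp, fun h0 => absurd h0 hc⟩
        · intro hc hp
          exact hk ⟨fun _ => hc, fun _ => hp⟩
    · intro a h1 h2
      by_contra ha0
      have k1 := (hmem a ha0).mp h1
      have k2 := (hmem (-a) (neg_ne_zero.mpr ha0)).mp h2
      rw [hcneg a ha0, bk_neg_mem_iff hP ha0] at k2
      by_cases hp : a ∈ P
      · exact (k2.mpr (k1.mp hp)) hp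
      · exact hp (k1.mpr (k2.mp hp))
  -- P' is compatible
  have hP'comp : Compat P' := by
    intro a b haP' hbP' hdP'
    by_cases ha0 : a = 0
    · rw [ha0, hvz]; exact hnonneg b
    by_contra hle
    push_neg at hle
    by_cases hb0 : b = 0
    · have hna : -a ∈ P' := by rwa [hb0, zero_sub] at hdP'
      exact ha0 (hP'ord.2.2.2 a haP' hna)
    have hd0 : b - a ≠ 0 := by
      intro h
      rw [sub_eq_zero] at h
      rw [h] at hle
      exact lt_irrefl _ hle
    have hvd : v (b - a) = v a := by
      have h1 : v (b + -a) = v (-a) :=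
        bk_v_add_eq v hnonneg hzero hmul hna (by rw [hvneg]; exact hle)
      rw [← sub_eq_add_neg] at h1
      rw [h1, hvneg]
    have hcd : c (b - a) = c a := hceqv _ _ hd0 ha0 hvd
    have hPa := (hmem a ha0).mp haP'
    have hPd := (hmem _ hd0).mp hdP'
    by_cases hPa' : a ∈ P
    · have hPd' : b - a ∈ P := hPd.mpr (by rw [hcd]; exact hPa.mp hPa')
      have h1 := bk_le_add hP v hPcomp hPa' hPd'
      have e : a + (b - a) = b := by ring
      rw [e] at h1
      linarith
    · have hna' : -a ∈ P := (bk_neg_mem_iff hP ha0).mpr hPa'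
      have hPd' : b - a ∉ P := by
        intro h
        exact hPa' (hPa.mpr (by rw [← hcd]; exact hPd.mp h))
      have hnd' : -(b - a) ∈ P := (bk_neg_mem_iff hP hd0).mpr hPd'
      have h1 := bk_le_add hP v hPcomp hna' hnd'
      have e : -a + -(b - a) = -b := by ring
      rw [e, hvneg, hvneg] at h1
      linarith
  -- P' induces the same residue ordering
  have hres : Res P' = Res P := by
    ext x
    constructor
    · rintro ⟨a, haQ, hax⟩
      by_cases hma : v (a : L) < 1
      · have h0 : Ideal.Quotient.mk m a = 0 :=
          Ideal.Quotient.eq_zero_iff_mem.mpr ((hm a).mpr hma)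
        refine ⟨0, ?_, ?_⟩
        · show ((0 : O) : L) ∈ P
          rw [ZeroMemClass.coe_zero]
          exact bk_zero_mem hP
        · rw [map_zero, ← hax, h0]
      · have hva : v (a:L) = 1 := le_antisymm ((hO _).mp a.2) (not_lt.mp hma)
        have ha0 : (a:L) ≠ 0 := by
          intro h
          rw [h, hvz] at hva
          norm_num at hva
        have hc0 : c (a:L) = 0 := hcone _ ha0 hva
        have haP : (a:L) ∈ P := ((hmem _ ha0).mp haQ).mpr hc0
        exact ⟨a, haP, hax⟩
    · rintro ⟨a, haQ, hax⟩
      by_cases hma : v (a : L) < 1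
      · have h0 : Ideal.Quotient.mk m a = 0 :=
          Ideal.Quotient.eq_zero_iff_mem.mpr ((hm a).mpr hma)
        refine ⟨0, ?_, ?_⟩
        · show ((0 : O) : L) ∈ P'
          rw [ZeroMemClass.coe_zero]
          exact h0mem
        · rw [map_zero, ← hax, h0]
      · have hva : v (a:L) = 1 := le_antisymm ((hO _).mp a.2) (not_lt.mp hma)
        have ha0 : (a:L) ≠ 0 := by
          intro h
          rw [h, hvz] at hva
          norm_num at hva
        have hc0 : c (a:L) = 0 := hcone _ ha0 hva
        have haP' : (a:L) ∈ P' := (hmem _ ha0).mpr (iff_of_true haQ hc0)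
        exact ⟨a, haP', hax⟩
  -- sign condition
  have hsgn : SgnCond P' := by
    constructor
    · intro hε1 hcon
      have hng0 : (-g : L) ≠ 0 := neg_ne_zero.mpr hg0
      have h1 := (hmem _ hng0).mp hcon
      rw [hcneg g hg0, bk_neg_mem_iff hP hg0] at h1
      have hT2 : T ↔ g ∈ P := by
        rw [hTdef]
        constructor
        · intro h; exact h.1 hε1
        · intro h
          refine ⟨fun _ => h, fun h2 => ?_⟩
          exfalso; omega
      rw [hcgT, hT2] at h1
      by_cases hp : g ∈ P
      · exact (h1.mpr hp) hp
      · exact hp (h1.mp hp)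
    · intro hεm hcon
      have h1 := (hmem _ hg0).mp hcon
      have hT2 : T ↔ g ∉ P := by
        rw [hTdef]
        constructor
        · intro h; exact h.2 hεm
        · intro h
          refine ⟨fun h2 => ?_, fun _ => h⟩
          exfalso; omega
      rw [hcgT, hT2] at h1
      by_cases hp : g ∈ P
      · exact (h1.mp hp) hp
      · exact hp (h1.mpr hp)
  refine ⟨⟨P', hP'ord, hP'comp, hres, hsgn⟩, ?_⟩
  -- uniqueness
  intro hgen P₁ P₂ h1 h2
  have hresdet : ∀ Q : Set L, IsFieldOrdering Q → Res Q = Res P →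
      ∀ w : L, ∀ hw1 : v w = 1,
        (w ∈ Q ↔ Ideal.Quotient.mk m ⟨w, (hO w).mpr hw1.le⟩ ∈ Res P) := by
    intro Q hQ hrQ w hw1
    have hw0 : w ≠ 0 := by
      intro h
      rw [h, hvz] at hw1
      norm_num at hw1
    constructor
    · intro hwQ
      rw [← hrQ]
      exact ⟨⟨w, (hO w).mpr hw1.le⟩, hwQ, rfl⟩
    · intro hR
      by_contra hwQ
      have hnw : -w ∈ Q := (bk_neg_mem_iff hQ hw0).mpr hwQ
      have hvnw : v (-w) = 1 := by rw [hvneg]; exact hw1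
      have hR2 : Ideal.Quotient.mk m ⟨-w, (hO _).mpr hvnw.le⟩ ∈ Res P := by
        rw [← hrQ]
        exact ⟨⟨-w, (hO _).mpr hvnw.le⟩, hnw, rfl⟩
      obtain ⟨a0, ha0P, ha0x⟩ := hR
      obtain ⟨b0, hb0P, hb0x⟩ := hR2
      have hab : a0 + b0 ∈ m := by
        rw [← Ideal.Quotient.eq_zero_iff_mem, RingHom.map_add, ha0x, hb0x,
          ← RingHom.map_add]
        have e : (⟨w, (hO w).mpr hw1.le⟩ + ⟨-w, (hO _).mpr hvnw.le⟩ : O) = 0 :=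
          Subtype.ext (by push_cast; ring)
        rw [e, RingHom.map_zero]
      have habv : v ((a0 : L) + (b0 : L)) < 1 := by
        have h := (hm _).mp hab
        push_cast at h
        exact h
      have hsub : a0 - ⟨w, (hO w).mpr hw1.le⟩ ∈ m := (Ideal.Quotient.eq).mp ha0x
      have hsubv : v ((a0:L) - w) < 1 := by
        have h := (hm _).mp hsub
        push_cast at h
        exact h
      have hva0 : v (a0:L) = 1 := by
        have he : (a0:L) = ((a0:L) - w) + w := by ring
        rw [he, bk_v_add_eq v hnonneg hzero hmul hna (by rw [hw1]; exact hsubv), hw1]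
      have hle := bk_le_add hP v hPcomp ha0P hb0P
      linarith
  have hgdet : ∀ Q : Set L, IsFieldOrdering Q → SgnCond Q → (g ∈ Q ↔ ε = 1) := by
    intro Q hQ hsQ
    rcases hε with hε1 | hεm
    · refine ⟨fun _ => hε1, fun _ => ?_⟩
      rcases hQ.2.2.1 g with h | h
      · exact h
      · exact absurd h (hsQ.1 hε1)
    · have hgQ : g ∉ Q := hsQ.2 hεm
      exact ⟨fun h => absurd h hgQ, fun h => by exfalso; omega⟩
  have main : ∀ Q₁ Q₂ : Set L,
      (IsFieldOrdering Q₁ ∧ Compat Q₁ ∧ Res Q₁ = Res P ∧ SgnCond Q₁) →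
      (IsFieldOrdering Q₂ ∧ Compat Q₂ ∧ Res Q₂ = Res P ∧ SgnCond Q₂) →
      ∀ a : L, a ∈ Q₁ → a ∈ Q₂ := by
    rintro Q₁ Q₂ ⟨hQ1, _, hr1, hs1⟩ ⟨hQ2, _, hr2, hs2⟩ a ha1
    by_cases ha0 : a = 0
    · rw [ha0]; exact bk_zero_mem hQ2
    obtain ⟨u, hu0, hcase⟩ := hgen a ha0
    have huu0 : u * u ≠ 0 := mul_ne_zero hu0 hu0
    have mulsq : ∀ Q : Set L, IsFieldOrdering Q → ∀ x : L, x ≠ 0 →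
        (x * (u * u) ∈ Q ↔ x ∈ Q) := by
      intro Q hQ x hx
      rw [bk_mul_mem_iff hQ hx huu0]
      exact ⟨fun h => h.mpr (bk_sq_mem hQ u), fun h => iff_of_true h (bk_sq_mem hQ u)⟩
    rcases hcase with hva | hva
    · set w := a * (u*u)⁻¹ with hw
      have hw0 : w ≠ 0 := mul_ne_zero ha0 (inv_ne_zero huu0)
      have hww : v w = 1 := by
        rw [hw, hmul, bk_v_inv v hzero hmul huu0, hva, hmul,
          mul_inv_cancel₀ (by rw [← hmul]; exact hvne _ huu0)]
      have hae : a = w * (u*u) := by rw [hw]; field_simp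
      rw [hae] at ha1 ⊢
      rw [mulsq Q₂ hQ2 w hw0]
      rw [mulsq Q₁ hQ1 w hw0] at ha1
      exact (hresdet Q₂ hQ2 hr2 w hww).mpr ((hresdet Q₁ hQ1 hr1 w hww).mp ha1)
    · have hguu0 : g * (u * u) ≠ 0 := mul_ne_zero hg0 huu0
      set w := a * (g * (u*u))⁻¹ with hw
      have hw0 : w ≠ 0 := mul_ne_zero ha0 (inv_ne_zero hguu0)
      have hww : v w = 1 := by
        rw [hw, hmul, bk_v_inv v hzero hmul hguu0, hmul, hmul, hva,
          mul_inv_cancel₀]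
        rw [← hmul, ← hmul]
        exact hvne _ hguu0
      have hwg0 : w * g ≠ 0 := mul_ne_zero hw0 hg0
      have hae : a = (w * g) * (u * u) := by rw [hw]; field_simp
      rw [hae] at ha1 ⊢
      rw [mulsq Q₂ hQ2 _ hwg0, bk_mul_mem_iff hQ2 hw0 hg0]
      rw [mulsq Q₁ hQ1 _ hwg0, bk_mul_mem_iff hQ1 hw0 hg0] at ha1
      have d1 := hresdet Q₁ hQ1 hr1 w hww
      have d2 := hresdet Q₂ hQ2 hr2 w hww
      have e1 := hgdet Q₁ hQ1 hs1
      have e2 := hgdet Q₂ hQ2 hs2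
      rw [d2, e2, ← d1, ← e1]
      exact ha1
  ext a
  exact ⟨fun h => main P₁ P₂ h1 h2 a h, fun h => main P₂ P₁ h2 h1 a h⟩
end
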